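/- arXiv:1003.0729 — 10 statements merged into one kernel-verified Lean document; each statement's English description precedes it below -/
import Mathlib

section
/- Let N and K be positive integers, let D be an invertible real N×N matrix with D·Dᵀ ⪯ I (i.e., I − D·Dᵀ is positive semidefinite), let H_1, ..., H_K be real N×N matrices, and set H_{k,e} = D·H_k for each k. For real symmetric positive semidefinite N×N matrices X_1, ..., X_K define f(X_1, ..., X_K) = (1/2)·log det(I + Σ_{k=1}^{K} H_k X_k H_kᵀ) − (1/2)·log det(I + Σ_{k=1}^{K} H_{k,e} X_k H_{k,e}ᵀ). Then f is concave on K-tuples of positive semidefinite matrices: for any two such tuples (X_1,...,X_K), (Y_1,...,Y_K) and any θ ∈ [0,1], f(θX_1 + (1−θ)Y_1, ..., θX_K + (1−θ)Y_K) ≥ θ·f(X_1,...,X_K) + (1−θ)·f(Y_1,...,Y_K). -/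
/-!
Because `D` is invertible, `I + ∑ H_{k,e} X_k H_{k,e}ᵀ = D (A + M) Dᵀ` with
`A = I + ∑ H_k X_k H_kᵀ`, which is affine in `X`, and `M = D⁻¹ (I - D Dᵀ) D⁻ᵀ ⪰ 0`. Up to the
constant `log |det D|`, the function is therefore `½ (log det A - log det (A + M))`, and it suffices
that this is concave in `A ≻ 0`. Writing `M` as a sum of rank-one matrices `w wᵀ` and telescoping,
the matrix determinant lemma reduces this to the convexity of `A ↦ log (1 + wᵀ A⁻¹ w)`.
Diagonalising two positive definite matrices simultaneously, `A = P Pᵀ` and `B = P Δ Pᵀ`, turns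
that into the convexity of `c ↦ log (1 + ∑ pᵢ / cᵢ)` on the positive orthant, which follows from
the weighted AM-GM and Hölder inequalities.
-/

open Matrix

/-- The secrecy-sum-rate function
`f(X₁, …, X_K) = ½ log det(I + ∑ₖ Hₖ Xₖ Hₖᵀ) − ½ log det(I + ∑ₖ H_{k,e} Xₖ H_{k,e}ᵀ)`
with `H_{k,e} = D * Hₖ`. -/
noncomputable def secf {N K : ℕ} (D : Matrix (Fin N) (Fin N) ℝ)
    (H : Fin K → Matrix (Fin N) (Fin N) ℝ) (X : Fin K → Matrix (Fin N) (Fin N) ℝ) : ℝ :=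
  (1 / 2) * Real.log (1 + ∑ k, H k * X k * (H k)ᵀ).det
    - (1 / 2) * Real.log (1 + ∑ k, (D * H k) * X k * (D * H k)ᵀ).det

open Finset Real

namespace Real

theorem sum_rpow_mul_rpow_le {ι : Type*} (s : Finset ι) {x y : ι → ℝ} (hx : ∀ i ∈ s, 0 ≤ x i)
    (hy : ∀ i ∈ s, 0 ≤ y i) {a b : ℝ} (ha : 0 < a) (hb : 0 < b) (hab : a + b = 1) :
    ∑ i ∈ s, x i ^ a * y i ^ b ≤ (∑ i ∈ s, x i) ^ a * (∑ i ∈ s, y i) ^ b := by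
  have h := inner_le_Lp_mul_Lq_of_nonneg s (holderConjugate_one_div ha hb hab)
    (fun i hi => rpow_nonneg (hx i hi) a) (fun i hi => rpow_nonneg (hy i hi) b)
  simp only [one_div, inv_inv] at h
  convert h using 3 <;> refine sum_congr rfl fun i hi => ?_
  · exact (rpow_rpow_inv (hx i hi) ha.ne').symm
  · exact (rpow_rpow_inv (hy i hi) hb.ne').symm

theorem div_mul_add_mul_le_div_rpow_mul_div_rpow {p c d a b : ℝ} (hp : 0 ≤ p) (hc : 0 < c)
    (hd : 0 < d) (ha : 0 ≤ a) (hb : 0 ≤ b) (hab : a + b = 1) :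
    p / (a * c + b * d) ≤ (p / c) ^ a * (p / d) ^ b := by
  have hpow : (p / c) ^ a * (p / d) ^ b = p / (c ^ a * d ^ b) := by
    rw [div_rpow hp hc.le, div_rpow hp hd.le, div_mul_div_comm, ← rpow_add' hp (by simp [hab]),
      hab, rpow_one]
  rw [hpow]
  exact div_le_div_of_nonneg_left hp (by positivity)
    (geom_mean_le_arith_mean2_weighted ha hb hc.le hd.le hab)

theorem convexOn_log_one_add_sum_div {ι : Type*} [Fintype ι] {p : ι → ℝ} (hp : ∀ i, 0 ≤ p i) :
    ConvexOn ℝ (Set.univ.pi fun _ => Set.Ioi 0) fun c => log (1 + ∑ i, p i / c i) := by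
  refine convexOn_iff_forall_pos.2 ⟨convex_pi fun _ _ => convex_Ioi 0, ?_⟩
  intro c hc d hd a b ha hb hab
  simp only [Set.mem_pi, Set.mem_univ, Set.mem_Ioi, forall_const] at hc hd
  simp only [Pi.add_apply, Pi.smul_apply, smul_eq_mul]
  have hsum_pos : ∀ e : ι → ℝ, (∀ i, 0 < e i) → 0 < 1 + ∑ i, p i / e i := fun e he =>
    add_pos_of_pos_of_nonneg one_pos (sum_nonneg fun i _ => div_nonneg (hp i) (he i).le)
  -- Hölder over `Option ι`, the extra index carrying the summand `1`.
  let x : Option ι → ℝ := fun o => o.elim 1 fun i => p i / c i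
  let y : Option ι → ℝ := fun o => o.elim 1 fun i => p i / d i
  have hx : ∀ o ∈ univ, 0 ≤ x o := by
    rintro (_ | i) -
    exacts [zero_le_one, div_nonneg (hp i) (hc i).le]
  have hy : ∀ o ∈ univ, 0 ≤ y o := by
    rintro (_ | i) -
    exacts [zero_le_one, div_nonneg (hp i) (hd i).le]
  have holder := sum_rpow_mul_rpow_le univ hx hy ha hb hab
  simp only [x, y, Fintype.sum_option, Option.elim, one_rpow, one_mul] at holder
  have hmid : 1 + ∑ i, p i / (a * c i + b * d i)
      ≤ (1 + ∑ i, p i / c i) ^ a * (1 + ∑ i, p i / d i) ^ b :=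
    (add_le_add_right (sum_le_sum fun i _ => div_mul_add_mul_le_div_rpow_mul_div_rpow
      (hp i) (hc i) (hd i) ha.le hb.le hab) 1).trans holder
  have hlog := log_le_log (hsum_pos _ fun i => by have := hc i; have := hd i; positivity) hmid
  rwa [log_mul (rpow_pos_of_pos (hsum_pos c hc) a).ne' (rpow_pos_of_pos (hsum_pos d hd) b).ne',
    log_rpow (hsum_pos c hc), log_rpow (hsum_pos d hd)] at hlog

end Real

namespace Matrix

variable {n : Type*}

theorem convex_setOf_posDef : Convex ℝ {A : Matrix n n ℝ | A.PosDef} := by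
  intro A hA B hB a b ha hb hab
  rcases ha.eq_or_lt with rfl | ha
  · rw [zero_add] at hab
    simpa [hab] using hB
  · exact (hA.smul ha).add_posSemidef (hB.posSemidef.smul hb)

variable [Fintype n] [DecidableEq n]

open scoped MatrixOrder in
theorem PosDef.exists_eq_mul_transpose_and_eq_mul_diagonal_mul_transpose
    {A B : Matrix n n ℝ} (hA : A.PosDef) (hB : B.PosDef) :
    ∃ (P : Matrix n n ℝ) (δ : n → ℝ), IsUnit P ∧ (∀ i, 0 < δ i) ∧
      A = P * Pᵀ ∧ B = P * diagonal δ * Pᵀ := by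
  simp only [← conjTranspose_eq_transpose_of_trivial, ← star_eq_conjTranspose]
  obtain ⟨X, rfl⟩ := CStarAlgebra.nonneg_iff_eq_star_mul_self.mp hA.posSemidef.nonneg
  have hX : IsUnit (star X) := isUnit_of_mul_isUnit_left hA.isUnit
  set T := (star X)⁻¹
  have hXT : star X * T = 1 := mul_nonsing_inv _ ((isUnit_iff_isUnit_det _).mp hX)
  have hR : (T * B * star T).PosDef :=
    (IsUnit.posDef_star_right_conjugate_iff (isUnit_nonsing_inv_iff.mpr hX)).mpr hB
  obtain ⟨U, hU, δ, hδ, hspec⟩ : ∃ U ∈ unitary (Matrix n n ℝ), ∃ δ : n → ℝ, (∀ i, 0 < δ i) ∧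
      T * B * star T = U * diagonal δ * star U :=
    ⟨_, hR.1.eigenvectorUnitary.2, _, hR.eigenvalues_pos,
      by simpa [RCLike.ofReal_real_eq_id] using hR.1.spectral_theorem⟩
  refine ⟨star X * U, δ, hX.mul (Unitary.toUnits ⟨U, hU⟩).isUnit, hδ, ?_, ?_⟩
  · rw [star_mul, star_star, mul_assoc, ← mul_assoc U, Unitary.mul_star_self_of_mem hU, one_mul]
  · calc B = star X * T * B * star (star X * T) := by rw [hXT, star_one, one_mul, mul_one]
      _ = star X * (T * B * star T) * X := by rw [star_mul, star_star]; noncomm_ring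
      _ = _ := by rw [hspec, star_mul, star_star]; noncomm_ring

theorem dotProduct_inv_mulVec_mul_diagonal_mul_transpose (P : Matrix n n ℝ)
    {d : n → ℝ} (hd : ∀ i, d i ≠ 0) (w : n → ℝ) :
    w ⬝ᵥ (P * diagonal d * Pᵀ)⁻¹ *ᵥ w = ∑ i, (P⁻¹ *ᵥ w) i ^ 2 / d i := by
  rw [Matrix.mul_inv_rev, Matrix.mul_inv_rev, inv_diagonal, ← transpose_nonsing_inv,
    ← mulVec_mulVec, ← mulVec_mulVec, dotProduct_mulVec, vecMul_transpose]
  refine sum_congr rfl fun i _ => ?_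
  have hd' : d i * Ring.inverse d i = 1 :=
    congrFun (Ring.mul_inverse_cancel d (Pi.isUnit_iff.2 fun i => (hd i).isUnit)) i
  rw [mulVec_diagonal, eq_div_iff (hd i)]
  linear_combination (P⁻¹ *ᵥ w) i ^ 2 * hd'

theorem det_add_vecMulVec_self {A : Matrix n n ℝ} (hA : IsUnit A.det) (w : n → ℝ) :
    (A + vecMulVec w w).det = A.det * (1 + w ⬝ᵥ A⁻¹ *ᵥ w) := by
  rw [vecMulVec_eq Unit, det_add_replicateCol_mul_replicateRow hA,
    det_unique (1 + _ : Matrix Unit Unit ℝ), Matrix.mul_assoc, ← replicateCol_mulVec]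
  rfl

theorem convexOn_log_one_add_dotProduct_inv_mulVec (w : n → ℝ) :
    ConvexOn ℝ {A : Matrix n n ℝ | A.PosDef} fun A => log (1 + w ⬝ᵥ A⁻¹ *ᵥ w) := by
  refine ⟨convex_setOf_posDef, fun A hA B hB a b ha hb hab => ?_⟩
  obtain ⟨P, δ, -, hδ, rfl, rfl⟩ :=
    PosDef.exists_eq_mul_transpose_and_eq_mul_diagonal_mul_transpose hA hB
  have hscalar := convexOn_log_one_add_sum_div (p := fun i => (P⁻¹ *ᵥ w) i ^ 2)
    (fun _ => sq_nonneg _)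
  have h1 : (fun _ => (1 : ℝ)) ∈ Set.univ.pi fun _ : n => Set.Ioi (0 : ℝ) := by simp
  have hδ' : δ ∈ Set.univ.pi fun _ : n => Set.Ioi (0 : ℝ) := by simpa using hδ
  have hquad : ∀ c : n → ℝ, c ∈ Set.univ.pi (fun _ => Set.Ioi 0) →
      w ⬝ᵥ (P * diagonal c * Pᵀ)⁻¹ *ᵥ w = ∑ i, (P⁻¹ *ᵥ w) i ^ 2 / c i := fun c hc =>
    dotProduct_inv_mulVec_mul_diagonal_mul_transpose P (fun i => (hc i trivial).ne') w
  have hPP : P * Pᵀ = P * diagonal (fun _ => 1) * Pᵀ := by simp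
  have hcomb : a • (P * diagonal (fun _ => 1) * Pᵀ) + b • (P * diagonal δ * Pᵀ)
      = P * diagonal (a • (fun _ => 1) + b • δ) * Pᵀ := by
    have hdiag : diagonal (a • (fun _ => (1 : ℝ)) + b • δ)
        = a • diagonal (fun _ => 1) + b • diagonal δ := by
      rw [← diagonal_smul, ← diagonal_smul, diagonal_add]; rfl
    rw [hdiag]
    noncomm_ring
  simp only [smul_eq_mul, hPP, hcomb, hquad _ h1, hquad _ hδ',
    hquad _ (hscalar.1 h1 hδ' ha hb hab)]
  exact hscalar.2 h1 hδ' ha hb hab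

theorem log_det_add_vecMulVec_self {A : Matrix n n ℝ} (hA : A.PosDef) (w : n → ℝ) :
    log (A + vecMulVec w w).det = log A.det + log (1 + w ⬝ᵥ A⁻¹ *ᵥ w) := by
  have hq : 0 ≤ w ⬝ᵥ A⁻¹ *ᵥ w := by
    simpa using hA.inv.posSemidef.dotProduct_mulVec_nonneg w
  rw [det_add_vecMulVec_self hA.det_pos.ne'.isUnit w, log_mul hA.det_pos.ne' (by positivity)]

theorem concaveOn_log_det_sub_log_det_add_sum_vecMulVec {ι : Type*} (s : Finset ι)
    (w : ι → n → ℝ) : ConcaveOn ℝ {A : Matrix n n ℝ | A.PosDef}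
      fun A => log A.det - log (A + ∑ j ∈ s, vecMulVec (w j) (w j)).det := by
  classical
  induction s using Finset.induction_on with
  | empty => simpa using concaveOn_const (0 : ℝ) convex_setOf_posDef
  | insert j s hj ih =>
    set S := ∑ j ∈ s, vecMulVec (w j) (w j) with hS_def
    have hS : S.PosSemidef := posSemidef_sum _ fun j _ => by
      simpa using posSemidef_vecMulVec_self_star (w j)
    have hstep : ConcaveOn ℝ {A : Matrix n n ℝ | A.PosDef}
        fun A => -log (1 + w j ⬝ᵥ (A + S)⁻¹ *ᵥ w j) :=
      ((convexOn_log_one_add_dotProduct_inv_mulVec (w j)).neg.translate_left S).subset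
        (fun A hA => by simpa [add_comm S] using hA.add_posSemidef hS) convex_setOf_posDef
    refine (ih.add hstep).congr fun A hA => ?_
    rw [sum_insert hj, ← hS_def, ← add_assoc, add_right_comm A,
      log_det_add_vecMulVec_self (hA.add_posSemidef hS)]
    simp only [Pi.add_apply]
    ring

open scoped MatrixOrder in
theorem concaveOn_log_det_sub_log_det_add {M : Matrix n n ℝ} (hM : M.PosSemidef) :
    ConcaveOn ℝ {A : Matrix n n ℝ | A.PosDef} fun A => log A.det - log (A + M).det := by
  obtain ⟨m, v, rfl⟩ := posSemidef_iff_eq_sum_vecMulVec.mp hM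
  simpa only [star_trivial] using concaveOn_log_det_sub_log_det_add_sum_vecMulVec Finset.univ v

theorem posDef_one_add_sum_mul_mul_transpose {ι m : Type*} [Fintype ι] [Fintype m]
    (H : ι → Matrix n m ℝ) {X : ι → Matrix m m ℝ}
    (hX : ∀ k, (X k).PosSemidef) : (1 + ∑ k, H k * X k * (H k)ᵀ).PosDef :=
  PosDef.one.add_posSemidef <| posSemidef_sum _ fun k _ => by
    simpa using (hX k).mul_mul_conjTranspose_same (H k)

end Matrix

section
variable {N K : ℕ} {D : Matrix (Fin N) (Fin N) ℝ}

theorem secf_eq (hD : IsUnit D.det) (H : Fin K → Matrix (Fin N) (Fin N) ℝ)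
    {X : Fin K → Matrix (Fin N) (Fin N) ℝ} (hX : ∀ k, (X k).PosSemidef) :
    secf D H X = (1 / 2) * (log (1 + ∑ k, H k * X k * (H k)ᵀ).det
      - log (1 + ∑ k, H k * X k * (H k)ᵀ + D⁻¹ * (1 - D * Dᵀ) * (D⁻¹)ᵀ).det) - log |D.det| := by
  set G := 1 + ∑ k, H k * X k * (H k)ᵀ
  set M := D⁻¹ * (1 - D * Dᵀ) * (D⁻¹)ᵀ
  have hDM : D * M * Dᵀ = 1 - D * Dᵀ := by
    simp only [M, Matrix.mul_assoc]
    rw [← transpose_mul, mul_nonsing_inv _ hD, transpose_one, Matrix.mul_one, ← Matrix.mul_assoc,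
      mul_nonsing_inv _ hD, Matrix.one_mul]
  have hE : 1 + ∑ k, (D * H k) * X k * (D * H k)ᵀ = D * (G + M) * Dᵀ := by
    simp only [G, Matrix.mul_add, Matrix.add_mul, hDM, Matrix.mul_sum, Matrix.sum_mul,
      transpose_mul, Matrix.mul_assoc, mul_one]
    abel
  have hdet : (1 + ∑ k, (D * H k) * X k * (D * H k)ᵀ).det = D.det ^ 2 * (G + M).det := by
    rw [hE, det_mul, det_mul, det_transpose]; ring
  have hGM : (G + M).det ≠ 0 := fun h =>
    (posDef_one_add_sum_mul_mul_transpose (fun k => D * H k) hX).det_pos.ne'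
      (hdet.trans (by rw [h, mul_zero]))
  rw [secf, hdet, log_mul (pow_ne_zero 2 hD.ne_zero) hGM, log_pow, log_abs]
  push_cast
  ring

theorem concaveOn_secf (hD : IsUnit D.det) (hDD : (1 - D * Dᵀ).PosSemidef)
    (H : Fin K → Matrix (Fin N) (Fin N) ℝ) :
    ConcaveOn ℝ {X : Fin K → Matrix (Fin N) (Fin N) ℝ | ∀ k, (X k).PosSemidef} (secf D H) := by
  have hM : (D⁻¹ * (1 - D * Dᵀ) * (D⁻¹)ᵀ).PosSemidef := by
    simpa using hDD.mul_mul_conjTranspose_same D⁻¹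
  have hconv : Convex ℝ {X : Fin K → Matrix (Fin N) (Fin N) ℝ | ∀ k, (X k).PosSemidef} :=
    fun X hX Y hY a b ha hb _ k => ((hX k).smul ha).add ((hY k).smul hb)
  refine ⟨hconv, fun X hX Y hY a b ha hb hab => ?_⟩
  have hG : 1 + ∑ k, H k * (a • X + b • Y) k * (H k)ᵀ
      = a • (1 + ∑ k, H k * X k * (H k)ᵀ) + b • (1 + ∑ k, H k * Y k * (H k)ᵀ) := by
    simp only [Pi.add_apply, Pi.smul_apply, Matrix.mul_add, Matrix.add_mul, Matrix.mul_smul,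
      Matrix.smul_mul, sum_add_distrib, ← smul_sum, smul_add]
    linear_combination (norm := module) -hab • (1 : Matrix (Fin N) (Fin N) ℝ)
  have h := (concaveOn_log_det_sub_log_det_add hM).2
    (posDef_one_add_sum_mul_mul_transpose H hX) (posDef_one_add_sum_mul_mul_transpose H hY)
    ha hb hab
  rw [secf_eq hD H (hconv hX hY ha hb hab), secf_eq hD H hX, secf_eq hD H hY, hG]
  simp only [smul_eq_mul] at h ⊢
  linear_combination (1 / 2 : ℝ) * h - log |D.det| * hab

end

theorem stmt4_general {N K : ℕ}
    (D : Matrix (Fin N) (Fin N) ℝ) (hD : IsUnit D.det)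
    (hDD : (1 - D * Dᵀ).PosSemidef)
    (H : Fin K → Matrix (Fin N) (Fin N) ℝ)
    (X Y : Fin K → Matrix (Fin N) (Fin N) ℝ)
    (hX : ∀ k, (X k).PosSemidef) (hY : ∀ k, (Y k).PosSemidef)
    (θ : ℝ) (hθ0 : 0 ≤ θ) (hθ1 : θ ≤ 1) :
    secf D H (fun k => θ • X k + (1 - θ) • Y k)
      ≥ θ * secf D H X + (1 - θ) * secf D H Y :=
  (concaveOn_secf hD hDD H).2 hX hY hθ0 (sub_nonneg.2 hθ1) (add_sub_cancel θ 1)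

theorem stmt4 {N K : ℕ} (hN : 0 < N) (hK : 0 < K)
    (D : Matrix (Fin N) (Fin N) ℝ) (hD : IsUnit D.det)
    (hDD : (1 - D * Dᵀ).PosSemidef)
    (H : Fin K → Matrix (Fin N) (Fin N) ℝ)
    (X Y : Fin K → Matrix (Fin N) (Fin N) ℝ)
    (hX : ∀ k, (X k).PosSemidef) (hY : ∀ k, (Y k).PosSemidef)
    (θ : ℝ) (hθ0 : 0 ≤ θ) (hθ1 : θ ≤ 1) :
    secf D H (fun k => θ • X k + (1 - θ) • Y k)
      ≥ θ * secf D H X + (1 - θ) * secf D H Y :=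
  stmt4_general D hD hDD H X Y hX hY θ hθ0 hθ1
end

section
/- Let N and K be positive integers, let D be an invertible real N×N matrix with D·Dᵀ ⪯ I (i.e., I − D·Dᵀ is positive semidefinite), let H_1, ..., H_K be real N×N matrices, and set H_{k,e} = D·H_k for each k. For real symmetric positive semidefinite N×N matrices X_1, ..., X_K define f(X_1, ..., X_K) = (1/2)·log det(I + Σ_{k=1}^{K} H_k X_k H_kᵀ) − (1/2)·log det(I + Σ_{k=1}^{K} H_{k,e} X_k H_{k,e}ᵀ). Then f is monotone with respect to the positive semidefinite order: for any positive semidefinite X_1, ..., X_K and any positive semidefinite Δ_1, ..., Δ_K, f(X_1, ..., X_K) ≤ f(X_1 + Δ_1, ..., X_K + Δ_K). -/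
/-!
Write `S = ∑ Hₖ Xₖ Hₖᵀ`, `T = ∑ Hₖ Δₖ Hₖᵀ`, `P = I + S` and `E = I + D S Dᵀ`, so that
`2 f = log det P - log det E`. By the matrix determinant lemma, passing from `S` to `S + T`
adds `log det (I + T P⁻¹)` to the first term and `log det (I + T Dᵀ E⁻¹ D)` to the second.
The hypothesis `D Dᵀ ⪯ I` says exactly `D P Dᵀ ⪯ E`; inverting and conjugating by `D` gives
`Dᵀ E⁻¹ D ⪯ P⁻¹`, and `M ↦ det (I + T M) = det (I + √T M √T)` is monotone on the PSD cone.
-/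

open Matrix

open scoped MatrixOrder

namespace Matrix

variable {n : Type*} [Fintype n] [DecidableEq n]

lemma one_le_det_of_one_le {M : Matrix n n ℝ} (h : 1 ≤ M) : 1 ≤ M.det := by
  have hM : M.IsHermitian := (zero_le_one.trans h).posSemidef.isHermitian
  rw [← map_one (algebraMap ℝ _), algebraMap_le_iff_le_spectrum (ha := hM.isSelfAdjoint)] at h
  rw [hM.det_eq_prod_eigenvalues]
  exact Finset.one_le_prod fun i _ => by simpa using h _ (hM.eigenvalues_mem_spectrum_real i)

lemma det_le_det_of_le {A B : Matrix n n ℝ} (hA : 0 ≤ A) (hAB : A ≤ B) : A.det ≤ B.det := by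
  by_cases hA0 : A.det = 0
  · exact hA0 ▸ (hA.trans hAB).posSemidef.det_nonneg
  have hApd : A.PosDef := hA.posSemidef.posDef_iff_det_ne_zero.mpr hA0
  set R := CFC.sqrt (B - A)
  have hR : R * R = B - A := CFC.sqrt_mul_sqrt_self _ (sub_nonneg.mpr hAB)
  have hRR : 0 ≤ R * A⁻¹ * R :=
    conjugate_nonneg_of_nonneg hApd.inv.posSemidef.nonneg (CFC.sqrt_nonneg _)
  calc A.det = A.det * 1 := (mul_one _).symm
    _ ≤ A.det * (1 + R * A⁻¹ * R).det :=
      mul_le_mul_of_nonneg_left (one_le_det_of_one_le (le_add_of_nonneg_right hRR))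
        hA.posSemidef.det_nonneg
    _ = B.det := by rw [← det_add_mul _ _ (isUnit_iff_ne_zero.mpr hA0), hR, add_sub_cancel]

/-- `A ≤ B` and `B⁻¹ ≤ A⁻¹` are the two Schur-complement conditions for the block matrix
`[[B, 1], [1, A⁻¹]]` to be positive semidefinite. -/
lemma inv_le_inv_of_le {A B : Matrix n n ℝ} (hA : A.PosDef) (hAB : A ≤ B) : B⁻¹ ≤ A⁻¹ := by
  have hB : B.PosDef := by simpa using hA.add_posSemidef (le_iff.mp hAB)
  have := hA.isUnit.invertible
  have := hB.isUnit.invertible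
  have := hA.inv.isUnit.invertible
  have hBlock := (PosDef.fromBlocks₂₂ B 1 hA.inv).mpr
    (by simpa [inv_inv_of_invertible] using le_iff.mp hAB)
  simpa [le_iff] using (PosDef.fromBlocks₁₁ 1 A⁻¹ hB).mp hBlock

lemma transpose_mul_inv_mul_le_inv {P E D : Matrix n n ℝ} (hP : P.PosDef) (hD : IsUnit D.det)
    (h : D * P * Dᵀ ≤ E) : Dᵀ * E⁻¹ * D ≤ P⁻¹ := by
  have hDPD : (D * P * Dᵀ).PosDef :=
    (IsUnit.posDef_star_right_conjugate_iff ((isUnit_iff_isUnit_det D).mpr hD)).mpr hP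
  have hDt : IsUnit Dᵀ.det := by rwa [det_transpose]
  calc Dᵀ * E⁻¹ * D ≤ Dᵀ * (D * P * Dᵀ)⁻¹ * D :=
        star_left_conjugate_le_conjugate (inv_le_inv_of_le hDPD h) D
    _ = P⁻¹ := by
      simp only [Matrix.mul_inv_rev, Matrix.mul_assoc, mul_nonsing_inv_cancel_left _ _ hDt,
        nonsing_inv_mul _ hD, Matrix.mul_one]

lemma det_one_add_mul_le_of_le {T M M' : Matrix n n ℝ} (hT : 0 ≤ T) (hM : 0 ≤ M)
    (hMM' : M ≤ M') : (1 + T * M).det ≤ (1 + T * M').det := by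
  set R := CFC.sqrt T
  have hR : IsSelfAdjoint R := .of_nonneg (CFC.sqrt_nonneg T)
  have hSym (X : Matrix n n ℝ) : (1 + T * X).det = (1 + R * X * R).det := by
    rw [← CFC.sqrt_mul_sqrt_self T hT, Matrix.mul_assoc, det_one_add_mul_comm, Matrix.mul_assoc]
  rw [hSym, hSym]
  exact det_le_det_of_le (le_add_of_le_of_nonneg zero_le_one (hR.conjugate_nonneg hM))
    (add_le_add_right (hR.conjugate_le_conjugate hMM') 1)

end Matrix

section SecrecyRate

variable {n : Type*} [Fintype n] [DecidableEq n]

noncomputable def secrecyRate (D S : Matrix n n ℝ) : ℝ :=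
  Real.log (1 + S).det - Real.log (1 + D * S * Dᵀ).det

theorem secrecyRate_le_secrecyRate_add {D S T : Matrix n n ℝ} (hD : IsUnit D.det) (hDD : D * Dᵀ ≤ 1)
    (hS : 0 ≤ S) (hT : 0 ≤ T) : secrecyRate D S ≤ secrecyRate D (S + T) := by
  set P := 1 + S
  set E := 1 + D * S * Dᵀ
  have hP : P.PosDef := PosDef.one.add_posSemidef hS.posSemidef
  have hE : E.PosDef := PosDef.one.add_posSemidef (star_right_conjugate_nonneg hS D).posSemidef
  set M := Dᵀ * E⁻¹ * D
  have hM : 0 ≤ M := star_left_conjugate_nonneg hE.inv.posSemidef.nonneg D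
  have hMP : M ≤ P⁻¹ := transpose_mul_inv_mul_le_inv hP hD <| by
    simpa [P, E, Matrix.mul_add, Matrix.add_mul] using hDD
  have hDetP : (1 + (S + T)).det = P.det * (1 + T * P⁻¹).det := by
    simpa [P, add_assoc] using det_add_mul (A := P) 1 T hP.det_pos.ne'.isUnit
  have hDetE : (1 + D * (S + T) * Dᵀ).det = E.det * (1 + T * M).det := by
    simpa [E, M, Matrix.mul_add, Matrix.add_mul, Matrix.mul_assoc, add_assoc]
      using det_add_mul (A := E) D (T * Dᵀ) hE.det_pos.ne'.isUnit
  have hOne : 1 ≤ (1 + T * M).det := by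
    simpa using det_one_add_mul_le_of_le hT le_rfl hM
  have hMono := det_one_add_mul_le_of_le hT hM hMP
  unfold secrecyRate
  rw [hDetP, hDetE, Real.log_mul hP.det_pos.ne' (by linarith),
    Real.log_mul hE.det_pos.ne' (by linarith)]
  linarith [Real.log_le_log (by linarith) hMono]

end SecrecyRate

lemma sum_conj_eq_conj_sum {ι n : Type*} [Fintype ι] [Fintype n] (D : Matrix n n ℝ)
    (H X : ι → Matrix n n ℝ) :
    ∑ k, (D * H k) * X k * (D * H k)ᵀ = D * (∑ k, H k * X k * (H k)ᵀ) * Dᵀ := by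
  simp only [Matrix.mul_sum, Matrix.sum_mul, transpose_mul, Matrix.mul_assoc]

lemma sum_conj_nonneg {ι n : Type*} [Fintype ι] [Fintype n] (H X : ι → Matrix n n ℝ)
    (hX : ∀ k, 0 ≤ X k) : 0 ≤ ∑ k, H k * X k * (H k)ᵀ :=
  Finset.sum_nonneg fun k _ => star_right_conjugate_nonneg (hX k) (H k)

lemma secf_eq_half_secrecyRate {N K : ℕ} (D : Matrix (Fin N) (Fin N) ℝ)
    (H X : Fin K → Matrix (Fin N) (Fin N) ℝ) :
    secf D H X = secrecyRate D (∑ k, H k * X k * (H k)ᵀ) / 2 := by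
  rw [secf, secrecyRate, sum_conj_eq_conj_sum]
  ring

theorem stmt5_general {N K : ℕ}
    (D : Matrix (Fin N) (Fin N) ℝ) (hD : IsUnit D.det)
    (hDD : (1 - D * Dᵀ).PosSemidef)
    (H : Fin K → Matrix (Fin N) (Fin N) ℝ)
    (X Δ : Fin K → Matrix (Fin N) (Fin N) ℝ)
    (hX : ∀ k, (X k).PosSemidef) (hΔ : ∀ k, (Δ k).PosSemidef) :
    secf D H X ≤ secf D H (fun k => X k + Δ k) := by
  have hSum : ∑ k, H k * (X k + Δ k) * (H k)ᵀ
      = ∑ k, H k * X k * (H k)ᵀ + ∑ k, H k * Δ k * (H k)ᵀ := by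
    simp only [Matrix.mul_add, Matrix.add_mul, Finset.sum_add_distrib]
  rw [secf_eq_half_secrecyRate, secf_eq_half_secrecyRate, hSum]
  gcongr
  exact secrecyRate_le_secrecyRate_add hD (le_iff.mpr hDD)
    (sum_conj_nonneg H X fun k => (hX k).nonneg) (sum_conj_nonneg H Δ fun k => (hΔ k).nonneg)

theorem stmt5 {N K : ℕ} (hN : 0 < N) (hK : 0 < K)
    (D : Matrix (Fin N) (Fin N) ℝ) (hD : IsUnit D.det)
    (hDD : (1 - D * Dᵀ).PosSemidef)
    (H : Fin K → Matrix (Fin N) (Fin N) ℝ)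
    (X Δ : Fin K → Matrix (Fin N) (Fin N) ℝ)
    (hX : ∀ k, (X k).PosSemidef) (hΔ : ∀ k, (Δ k).PosSemidef) :
    secf D H X ≤ secf D H (fun k => X k + Δ k) :=
  stmt5_general D hD hDD H X Δ hX hΔ
end

section
/- Let A, B, Δ be real symmetric n×n matrices with A positive semidefinite, Δ positive semidefinite, and B positive definite. Then det(B) · det(A + B + Δ) ≤ det(B + Δ) · det(A + B); equivalently, det(B)/det(A + B) ≤ det(B + Δ)/det(A + B + Δ), all four determinants being positive. -/
/-!
Write `Δ = Sᴴ S`. The matrix determinant lemma gives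
`det (W + Δ) = det W · det (1 + S W⁻¹ Sᴴ)` for every positive definite `W`, so the claim says
that `W ↦ det (1 + S W⁻¹ Sᴴ)` does not increase from `W = B` to `W = A + B`. This holds because
inversion reverses the Loewner order and the determinant is monotone on positive definite
matrices, since `det (1 + P) ≥ 1` for `P ⪰ 0`.
-/

open Matrix
open scoped ComplexOrder

variable {ι : Type*} [Fintype ι] [DecidableEq ι]

open scoped MatrixOrder in
lemma Matrix.PosSemidef.exists_eq_conjTranspose_mul_self {𝕜 : Type*} [RCLike 𝕜]
    {E : Matrix ι ι 𝕜} (hE : E.PosSemidef) : ∃ S : Matrix ι ι 𝕜, E = Sᴴ * S :=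
  CStarAlgebra.nonneg_iff_eq_star_mul_self.mp hE.nonneg

lemma Matrix.inv_sub_inv_add_eq {α : Type*} [CommRing α] {X A : Matrix ι ι α}
    (hX : IsUnit X.det) (hXA : IsUnit (X + A).det) :
    X⁻¹ - (X + A)⁻¹ = (X + A)⁻¹ * (A + A * X⁻¹ * A) * (X + A)⁻¹ := by
  have hmid : A + A * X⁻¹ * A = (X + A) * X⁻¹ * (X + A) - (X + A) := by
    simp only [Matrix.add_mul, Matrix.mul_add, mul_nonsing_inv _ hX, Matrix.one_mul,
      nonsing_inv_mul_cancel_right _ _ hX]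
    abel
  rw [hmid]
  simp only [Matrix.mul_sub, Matrix.sub_mul, Matrix.mul_assoc,
    nonsing_inv_mul_cancel_left _ _ hXA, mul_nonsing_inv _ hXA, Matrix.mul_one]

lemma Matrix.PosDef.posSemidef_inv_sub_inv_add {𝕜 : Type*} [RCLike 𝕜] {X A : Matrix ι ι 𝕜}
    (hX : X.PosDef) (hA : A.PosSemidef) : (X⁻¹ - (X + A)⁻¹).PosSemidef := by
  have hXA := hX.add_posSemidef hA
  rw [inv_sub_inv_add_eq ((isUnit_iff_isUnit_det X).mp hX.isUnit)
    ((isUnit_iff_isUnit_det _).mp hXA.isUnit)]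
  have hmid : (A + A * X⁻¹ * A).PosSemidef := by
    simpa only [hA.isHermitian.eq] using
      hA.add (hX.inv.posSemidef.conjTranspose_mul_mul_same A)
  simpa only [hXA.inv.isHermitian.eq] using hmid.conjTranspose_mul_mul_same (X + A)⁻¹

lemma Matrix.PosSemidef.one_le_det_one_add {P : Matrix ι ι ℝ} (hP : P.PosSemidef) :
    1 ≤ (1 + P).det := by
  set U := hP.isHermitian.eigenvectorUnitary
  have hdiag :
      1 + P = U * (1 + diagonal hP.isHermitian.eigenvalues) * star (U : Matrix ι ι ℝ) := by
    conv_lhs => rw [hP.isHermitian.spectral_theorem]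
    simp [U, Matrix.mul_add, Matrix.add_mul]
  rw [hdiag, det_mul, det_mul, mul_right_comm, ← det_mul, Unitary.mul_star_self_of_mem U.2,
    det_one, one_mul, ← diagonal_one, diagonal_add, det_diagonal]
  exact Finset.one_le_prod fun i _ ↦ by simpa using hP.eigenvalues_nonneg i

lemma Matrix.PosDef.det_le_det_add {X E : Matrix ι ι ℝ} (hX : X.PosDef) (hE : E.PosSemidef) :
    X.det ≤ (X + E).det := by
  obtain ⟨S, rfl⟩ := hE.exists_eq_conjTranspose_mul_self
  rw [det_add_mul _ _ hX.det_pos.ne'.isUnit]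
  exact le_mul_of_one_le_right hX.det_pos.le
    (hX.inv.posSemidef.mul_mul_conjTranspose_same S).one_le_det_one_add

lemma Matrix.PosDef.det_one_add_mul_inv_add_mul_le {m : Type*} [Fintype m] [DecidableEq m]
    {X A : Matrix ι ι ℝ} (hX : X.PosDef) (hA : A.PosSemidef) (S : Matrix m ι ℝ) :
    (1 + S * (X + A)⁻¹ * Sᴴ).det ≤ (1 + S * X⁻¹ * Sᴴ).det := by
  have hQ : (1 + S * (X + A)⁻¹ * Sᴴ).PosDef :=
    PosDef.one.add_posSemidef ((hX.add_posSemidef hA).inv.posSemidef.mul_mul_conjTranspose_same S)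
  have hsplit : 1 + S * X⁻¹ * Sᴴ =
      1 + S * (X + A)⁻¹ * Sᴴ + S * (X⁻¹ - (X + A)⁻¹) * Sᴴ := by
    rw [Matrix.mul_sub, Matrix.sub_mul]
    abel
  rw [hsplit]
  exact hQ.det_le_det_add ((hX.posSemidef_inv_sub_inv_add hA).mul_mul_conjTranspose_same S)

theorem stmt6 {n : ℕ} (A B Δ : Matrix (Fin n) (Fin n) ℝ)
    (hA : A.PosSemidef) (hΔ : Δ.PosSemidef) (hB : B.PosDef) :
    B.det * (A + B + Δ).det ≤ (B + Δ).det * (A + B).det := by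
  obtain ⟨S, rfl⟩ := hΔ.exists_eq_conjTranspose_mul_self
  have hAB : (A + B).PosDef := hB.posSemidef_add hA
  have hmono := hB.det_one_add_mul_inv_add_mul_le hA S
  rw [add_comm B A] at hmono
  rw [det_add_mul _ _ hB.det_pos.ne'.isUnit, det_add_mul _ _ hAB.det_pos.ne'.isUnit]
  calc B.det * ((A + B).det * (1 + S * (A + B)⁻¹ * Sᴴ).det)
      = B.det * (A + B).det * (1 + S * (A + B)⁻¹ * Sᴴ).det := by ring
    _ ≤ B.det * (A + B).det * (1 + S * B⁻¹ * Sᴴ).det :=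
        mul_le_mul_of_nonneg_left hmono (mul_pos hB.det_pos hAB.det_pos).le
    _ = B.det * (1 + S * B⁻¹ * Sᴴ).det * (A + B).det := by ring
end

section
/- Let C be a real symmetric positive semidefinite n×n matrix. Then the function X ↦ log det(X) − log det(X + C) is concave on the convex set of real symmetric positive definite n×n matrices: for any positive definite X, Y and any θ ∈ [0,1], log det(θX + (1−θ)Y) − log det(θX + (1−θ)Y + C) ≥ θ·(log det X − log det(X + C)) + (1−θ)·(log det Y − log det(Y + C)). -/
/-!
The function `f W = log det W - log det (W + C)` lies below each of its tangent planes: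
`f X ≤ f Z + tr ((Z⁻¹ - (Z + C)⁻¹) (X - Z))`, and averaging this at `Z = θ X + (1 - θ) Y` gives
concavity. The tangent-plane inequality says that the LogDet divergence of `X` from `Z` does not
increase when the same positive semidefinite `C` is added to both. Writing `C` as a sum of
rank-one matrices `v vᵀ`, it suffices to add one of them, where the matrix determinant lemma and
the Sherman–Morrison formula reduce the claim to the scalar inequality
`log (1 + q) - log (1 + p) ≤ r / (1 + q)` for `p = vᵀ X⁻¹ v`, `q = vᵀ Z⁻¹ v` and
`r = vᵀ Z⁻¹ (X - Z) Z⁻¹ v`. That one follows from `log t ≤ t - 1` and the Cauchy–Schwarz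
inequality `q² ≤ p (q + r)` for the inner product given by `X`, applied to `X⁻¹ v` and `Z⁻¹ v`.
-/

open Matrix

theorem Real.log_one_add_sub_log_one_add_le {p q r : ℝ} (hp : 0 < p) (hq : 0 ≤ q)
    (h : q ^ 2 ≤ p * (q + r)) : Real.log (1 + q) - Real.log (1 + p) ≤ r / (1 + q) := by
  have hlog : Real.log ((1 + q) / (1 + p)) ≤ (1 + q) / (1 + p) - 1 :=
    Real.log_le_sub_one_of_pos (by positivity)
  rw [Real.log_div (by positivity) (by positivity)] at hlog
  have key : (1 + q) / (1 + p) - 1 ≤ r / (1 + q) := by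
    rw [div_sub_one (by positivity), div_le_div_iff₀ (by positivity) (by positivity)]
    nlinarith [sq_nonneg (p - q)]
  linarith

namespace Matrix

variable {ι : Type*}

theorem PosDef.smul_add_one_sub_smul {X Y : Matrix ι ι ℝ} (hX : X.PosDef) (hY : Y.PosDef)
    {θ : ℝ} (hθ0 : 0 ≤ θ) (hθ1 : θ ≤ 1) : (θ • X + (1 - θ) • Y).PosDef := by
  rcases hθ0.eq_or_lt with rfl | hθ0
  · simpa using hY
  · exact (hX.smul hθ0).add_posSemidef (hY.posSemidef.smul (sub_nonneg.2 hθ1))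

variable [Fintype ι]

theorem PosSemidef.dotProduct_mulVec_sq_le {M : Matrix ι ι ℝ} (hM : M.PosSemidef) (a b : ι → ℝ) :
    (a ⬝ᵥ M *ᵥ b) ^ 2 ≤ (a ⬝ᵥ M *ᵥ a) * (b ⬝ᵥ M *ᵥ b) := by
  let := M.toSeminormedAddCommGroup hM
  let := M.toInnerProductSpace hM
  have hinner (x y : ι → ℝ) : inner ℝ x y = x ⬝ᵥ M *ᵥ y := by
    change (M *ᵥ y) ⬝ᵥ star x = _
    rw [star_trivial, dotProduct_comm]
  simpa only [hinner, sq] using real_inner_mul_inner_self_le a b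

variable [DecidableEq ι]

theorem det_add_vecMulVec {A : Matrix ι ι ℝ} (hA : IsUnit A.det) (u v : ι → ℝ) :
    (A + vecMulVec u v).det = A.det * (1 + v ⬝ᵥ A⁻¹ *ᵥ u) := by
  rw [vecMulVec_eq Unit, det_add_replicateCol_mul_replicateRow hA, ← replicateRow_vecMul,
    det_unique (n := Unit), dotProduct_mulVec]
  simp

theorem inv_add_vecMulVec {A : Matrix ι ι ℝ} (hA : IsUnit A.det) (u v : ι → ℝ)
    (h : 1 + v ⬝ᵥ A⁻¹ *ᵥ u ≠ 0) :
    (A + vecMulVec u v)⁻¹ = A⁻¹ - (1 + v ⬝ᵥ A⁻¹ *ᵥ u)⁻¹ • (A⁻¹ * vecMulVec u v * A⁻¹) := by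
  apply inv_eq_right_inv
  have hvAv : vecMulVec u v * (A⁻¹ * vecMulVec u v) = (v ⬝ᵥ A⁻¹ *ᵥ u) • vecMulVec u v := by
    rw [mul_vecMulVec, vecMulVec_mul_vecMulVec, vecMulVec_smul]
  rw [add_mul, mul_sub, mul_sub, mul_nonsing_inv A hA, Matrix.mul_smul, Matrix.mul_smul,
    ← Matrix.mul_assoc, ← Matrix.mul_assoc, mul_nonsing_inv A hA, Matrix.one_mul,
    ← Matrix.mul_assoc _ (A⁻¹ * _), hvAv, Matrix.smul_mul]
  match_scalars <;> simp [field]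

theorem trace_inv_add_vecMulVec_mul {A : Matrix ι ι ℝ} (hA : IsUnit A.det) (u v : ι → ℝ)
    (h : 1 + v ⬝ᵥ A⁻¹ *ᵥ u ≠ 0) (M : Matrix ι ι ℝ) :
    ((A + vecMulVec u v)⁻¹ * M).trace =
      (A⁻¹ * M).trace - (v ᵥ* A⁻¹) ⬝ᵥ M *ᵥ (A⁻¹ *ᵥ u) / (1 + v ⬝ᵥ A⁻¹ *ᵥ u) := by
  rw [inv_add_vecMulVec hA u v h, sub_mul, trace_sub, smul_mul, trace_smul, mul_vecMulVec,
    vecMulVec_mul, vecMulVec_mul, trace_vecMulVec, smul_eq_mul, dotProduct_comm (A⁻¹ *ᵥ u),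
    ← dotProduct_mulVec, inv_mul_eq_div]

/-- The LogDet divergence `tr (Z⁻¹ X) - log det (Z⁻¹ X) - n` of `X` from `Z`, i.e. the Bregman
divergence of `- log det`. -/
noncomputable def logDetDivergence (Z X : Matrix ι ι ℝ) : ℝ :=
  (Z⁻¹ * (X - Z)).trace - (Real.log X.det - Real.log Z.det)

theorem logDetDivergence_add_vecMulVec_le {Z X : Matrix ι ι ℝ} (hZ : Z.PosDef) (hX : X.PosDef)
    (v : ι → ℝ) :
    logDetDivergence (Z + vecMulVec v v) (X + vecMulVec v v) ≤ logDetDivergence Z X := by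
  rcases eq_or_ne v 0 with rfl | hv
  · simp
  set p := v ⬝ᵥ X⁻¹ *ᵥ v
  set q := v ⬝ᵥ Z⁻¹ *ᵥ v
  set r := (Z⁻¹ *ᵥ v) ⬝ᵥ (X - Z) *ᵥ (Z⁻¹ *ᵥ v) with hr_def
  have hp : 0 < p := hX.inv.dotProduct_mulVec_pos hv
  have hq : 0 < q := hZ.inv.dotProduct_mulVec_pos hv
  have hZdet : IsUnit Z.det := hZ.isUnit.map detMonoidHom
  have hXdet : IsUnit X.det := hX.isUnit.map detMonoidHom
  have hZv : Z *ᵥ Z⁻¹ *ᵥ v = v := by rw [mulVec_mulVec, mul_nonsing_inv _ hZdet, one_mulVec]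
  have hXv : X *ᵥ X⁻¹ *ᵥ v = v := by rw [mulVec_mulVec, mul_nonsing_inv _ hXdet, one_mulVec]
  have hcs : q ^ 2 ≤ p * (q + r) := by
    have hqr : (Z⁻¹ *ᵥ v) ⬝ᵥ X *ᵥ (Z⁻¹ *ᵥ v) = q + r := by
      rw [← sub_eq_iff_eq_add', hr_def, sub_mulVec, dotProduct_sub, hZv, dotProduct_comm _ v]
    have h := hX.posSemidef.dotProduct_mulVec_sq_le (Z⁻¹ *ᵥ v) (X⁻¹ *ᵥ v)
    rw [hXv, dotProduct_comm _ v, dotProduct_comm _ v, hqr] at h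
    linarith
  have hlogX : Real.log (X + vecMulVec v v).det = Real.log X.det + Real.log (1 + p) := by
    rw [det_add_vecMulVec hXdet, Real.log_mul hX.det_pos.ne' (by positivity)]
  have hlogZ : Real.log (Z + vecMulVec v v).det = Real.log Z.det + Real.log (1 + q) := by
    rw [det_add_vecMulVec hZdet, Real.log_mul hZ.det_pos.ne' (by positivity)]
  have hsymm : v ᵥ* Z⁻¹ = Z⁻¹ *ᵥ v := by
    rw [← vecMul_transpose, (isHermitian_iff_isSymm.mp hZ.inv.isHermitian).eq]
  have htrace := trace_inv_add_vecMulVec_mul hZdet v v (by positivity) (X - Z)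
  rw [hsymm] at htrace
  have := Real.log_one_add_sub_log_one_add_le hp hq.le hcs
  simp only [logDetDivergence, add_sub_add_right_eq_sub, hlogX, hlogZ, htrace]
  linarith

theorem logDetDivergence_add_sum_vecMulVec_le {κ : Type*} (s : Finset κ) (v : κ → ι → ℝ)
    {Z X : Matrix ι ι ℝ} (hZ : Z.PosDef) (hX : X.PosDef) :
    logDetDivergence (Z + ∑ i ∈ s, vecMulVec (v i) (v i)) (X + ∑ i ∈ s, vecMulVec (v i) (v i)) ≤
      logDetDivergence Z X := by
  induction s using Finset.cons_induction generalizing Z X with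
  | empty => simp
  | cons a s ha ih =>
    have hv : (vecMulVec (v a) (v a)).PosSemidef := by
      simpa using posSemidef_vecMulVec_self_star (v a)
    rw [Finset.sum_cons, ← add_assoc, ← add_assoc]
    exact (ih (hZ.add_posSemidef hv) (hX.add_posSemidef hv)).trans
      (logDetDivergence_add_vecMulVec_le hZ hX (v a))

theorem logDetDivergence_add_le {Z X C : Matrix ι ι ℝ} (hZ : Z.PosDef) (hX : X.PosDef)
    (hC : C.PosSemidef) : logDetDivergence (Z + C) (X + C) ≤ logDetDivergence Z X := by
  obtain ⟨m, v, rfl⟩ := posSemidef_iff_eq_sum_vecMulVec.mp hC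
  simpa using logDetDivergence_add_sum_vecMulVec_le Finset.univ v hZ hX

theorem log_det_sub_log_det_add_le_tangent {Z X C : Matrix ι ι ℝ} (hZ : Z.PosDef)
    (hX : X.PosDef) (hC : C.PosSemidef) :
    Real.log X.det - Real.log (X + C).det ≤
      Real.log Z.det - Real.log (Z + C).det + ((Z⁻¹ - (Z + C)⁻¹) * (X - Z)).trace := by
  have h := logDetDivergence_add_le hZ hX hC
  rw [logDetDivergence, logDetDivergence, add_sub_add_right_eq_sub] at h
  rw [sub_mul, trace_sub]
  linarith

end Matrix

theorem stmt7 {n : ℕ} (C : Matrix (Fin n) (Fin n) ℝ) (hC : C.PosSemidef)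
    (X Y : Matrix (Fin n) (Fin n) ℝ) (hX : X.PosDef) (hY : Y.PosDef)
    (θ : ℝ) (hθ0 : 0 ≤ θ) (hθ1 : θ ≤ 1) :
    Real.log (θ • X + (1 - θ) • Y).det - Real.log ((θ • X + (1 - θ) • Y) + C).det
      ≥ θ * (Real.log X.det - Real.log (X + C).det)
        + (1 - θ) * (Real.log Y.det - Real.log (Y + C).det) := by
  set Z := θ • X + (1 - θ) • Y with hZ_def
  have hZ : Z.PosDef := hX.smul_add_one_sub_smul hY hθ0 hθ1
  have hXZ := log_det_sub_log_det_add_le_tangent hZ hX hC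
  have hYZ := log_det_sub_log_det_add_le_tangent hZ hY hC
  have hcomb : θ • (X - Z) + (1 - θ) • (Y - Z) = 0 := by
    rw [hZ_def]
    module
  have htangent : θ * ((Z⁻¹ - (Z + C)⁻¹) * (X - Z)).trace
      + (1 - θ) * ((Z⁻¹ - (Z + C)⁻¹) * (Y - Z)).trace = 0 := by
    simpa [Matrix.mul_add, trace_add] using
      congrArg (fun M ↦ ((Z⁻¹ - (Z + C)⁻¹) * M).trace) hcomb
  linarith [mul_le_mul_of_nonneg_left hXZ hθ0,
    mul_le_mul_of_nonneg_left hYZ (sub_nonneg.2 hθ1)]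
end

section
/- Let n and m be positive integers with gcd(n, m) = 1 and m ≤ 2n, and set W = n(2n − 1). Then for every positive integer L, the map which sends a pair of digit sequences (b_0, ..., b_{L−1}) and (b'_0, ..., b'_{L−1}), with every b_l and b'_l in {0, 1, ..., n − 1}, to the integer Σ_{l=0}^{L−1} (n·b_l + m·b'_l)·W^l is injective: if Σ_{l=0}^{L−1} (n·b_l + m·b'_l)·W^l = Σ_{l=0}^{L−1} (n·b̃_l + m·b̃'_l)·W^l with all digits in {0, ..., n − 1}, then b_l = b̃_l and b'_l = b̃'_l for all l. -/
lemma key8 (n m : ℕ) (hn : 0 < n) (hgcd : Nat.gcd n m = 1)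
    (x y : ℤ) (hx : |x| ≤ (n : ℤ) - 1) (hy : |y| ≤ (n : ℤ) - 1)
    (hdvd : ((n : ℤ) * (2 * (n : ℤ) - 1)) ∣ ((n : ℤ) * x + (m : ℤ) * y)) :
    x = 0 ∧ y = 0 := by
  have hcop : IsCoprime (n : ℤ) (m : ℤ) := by
    rw [Int.isCoprime_iff_gcd_eq_one]
    simpa using hgcd
  have hn' : (0 : ℤ) < n := by exact_mod_cast hn
  have hdn : (n : ℤ) ∣ (m : ℤ) * y := by
    have h1 : (n : ℤ) ∣ (n : ℤ) * x + (m : ℤ) * y :=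
      dvd_trans ⟨2 * (n : ℤ) - 1, rfl⟩ hdvd
    have := dvd_sub h1 (Dvd.intro x rfl)
    simpa using this
  have hny : (n : ℤ) ∣ y := hcop.dvd_of_dvd_mul_left hdn
  have hy0 : y = 0 := by
    by_contra h
    have : (n : ℤ) ≤ |y| := by
      have := Int.le_of_dvd (abs_pos.mpr h) ((dvd_abs _ _).mpr hny)
      simpa using this
    linarith
  subst hy0
  have hdvd' : ((n : ℤ) * (2 * (n : ℤ) - 1)) ∣ (n : ℤ) * x := by simpa using hdvd
  have hx0 : (2 * (n : ℤ) - 1) ∣ x := by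
    rcases hdvd' with ⟨k, hk⟩
    exact ⟨k, mul_left_cancel₀ (ne_of_gt hn') (by rw [hk]; ring)⟩
  constructor
  · by_contra h
    have : (2 * (n : ℤ) - 1) ≤ |x| := by
      have := Int.le_of_dvd (abs_pos.mpr h) ((dvd_abs _ _).mpr hx0)
      simpa using this
    linarith
  · rfl

lemma main8 (n m : ℕ) (hn : 0 < n) (hgcd : Nat.gcd n m = 1) :
    ∀ L (x y : ℕ → ℤ), (∀ l, |x l| ≤ (n : ℤ) - 1) → (∀ l, |y l| ≤ (n : ℤ) - 1) →
      (∑ l ∈ Finset.range L, ((n : ℤ) * x l + (m : ℤ) * y l) * ((n : ℤ) * (2 * (n : ℤ) - 1)) ^ l = 0) →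
      ∀ l < L, x l = 0 ∧ y l = 0 := by
  intro L
  induction L with
  | zero => intro x y _ _ _ l hl; omega
  | succ L ih =>
    intro x y hx hy hsum l hl
    set W : ℤ := (n : ℤ) * (2 * (n : ℤ) - 1) with hW
    have hn' : (0 : ℤ) < n := by exact_mod_cast hn
    have hWne : W ≠ 0 := by
      have : (0:ℤ) < W := by
        apply mul_pos hn'
        linarith
      linarith
    rw [Finset.sum_range_succ'] at hsum
    have h1 : ∀ k ∈ Finset.range L,
        ((n : ℤ) * x (k+1) + (m : ℤ) * y (k+1)) * W ^ (k+1)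
        = W * (((n : ℤ) * x (k+1) + (m : ℤ) * y (k+1)) * W ^ k) := fun k _ => by ring
    rw [Finset.sum_congr rfl h1, ← Finset.mul_sum, pow_zero, mul_one] at hsum
    have hdvd : W ∣ ((n : ℤ) * x 0 + (m : ℤ) * y 0) := by
      refine ⟨-(∑ l ∈ Finset.range L, ((n : ℤ) * x (l+1) + (m : ℤ) * y (l+1)) * W ^ l), ?_⟩
      linarith
    obtain ⟨hx0, hy0⟩ := key8 n m hn hgcd _ _ (hx 0) (hy 0) hdvd
    have hsum' : ∑ l ∈ Finset.range L, ((n : ℤ) * x (l+1) + (m : ℤ) * y (l+1)) * W ^ l = 0 := by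
      have h2 : W * ∑ l ∈ Finset.range L, ((n : ℤ) * x (l+1) + (m : ℤ) * y (l+1)) * W ^ l = 0 := by
        rw [hx0, hy0] at hsum; linarith
      exact (mul_eq_zero.mp h2).resolve_left hWne
    have ihres := ih (fun l => x (l+1)) (fun l => y (l+1)) (fun l => hx _) (fun l => hy _) hsum'
    rcases l with _ | l
    · exact ⟨hx0, hy0⟩
    · exact ihres l (by omega)

theorem stmt8 (n m : ℕ) (hn : 0 < n) (hm : 0 < m) (hgcd : Nat.gcd n m = 1)
    (hmn : m ≤ 2 * n) (L : ℕ) (hL : 0 < L)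
    (b b' c c' : Fin L → ℤ)
    (hb : ∀ l, 0 ≤ b l ∧ b l ≤ (n : ℤ) - 1) (hb' : ∀ l, 0 ≤ b' l ∧ b' l ≤ (n : ℤ) - 1)
    (hc : ∀ l, 0 ≤ c l ∧ c l ≤ (n : ℤ) - 1) (hc' : ∀ l, 0 ≤ c' l ∧ c' l ≤ (n : ℤ) - 1)
    (heq : ∑ l : Fin L, ((n : ℤ) * b l + (m : ℤ) * b' l) * ((n : ℤ) * (2 * (n : ℤ) - 1)) ^ (l : ℕ)
         = ∑ l : Fin L, ((n : ℤ) * c l + (m : ℤ) * c' l) * ((n : ℤ) * (2 * (n : ℤ) - 1)) ^ (l : ℕ)) :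
    b = c ∧ b' = c' := by
  classical
  set x : ℕ → ℤ := fun l => if h : l < L then b ⟨l, h⟩ - c ⟨l, h⟩ else 0 with hxdef
  set y : ℕ → ℤ := fun l => if h : l < L then b' ⟨l, h⟩ - c' ⟨l, h⟩ else 0 with hydef
  have hxb : ∀ l, |x l| ≤ (n : ℤ) - 1 := by
    intro l
    simp only [hxdef]
    split
    · next h =>
      rw [abs_le]
      obtain ⟨h1, h2⟩ := hb ⟨l, h⟩
      obtain ⟨h3, h4⟩ := hc ⟨l, h⟩
      constructor <;> linarith
    · simp only [abs_zero]; omega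
  have hyb : ∀ l, |y l| ≤ (n : ℤ) - 1 := by
    intro l
    simp only [hydef]
    split
    · next h =>
      rw [abs_le]
      obtain ⟨h1, h2⟩ := hb' ⟨l, h⟩
      obtain ⟨h3, h4⟩ := hc' ⟨l, h⟩
      constructor <;> linarith
    · simp only [abs_zero]; omega
  have hsum : ∑ l ∈ Finset.range L,
      ((n : ℤ) * x l + (m : ℤ) * y l) * ((n : ℤ) * (2 * (n : ℤ) - 1)) ^ l = 0 := by
    rw [← Fin.sum_univ_eq_sum_range
      (fun l => ((n : ℤ) * x l + (m : ℤ) * y l) * ((n : ℤ) * (2 * (n : ℤ) - 1)) ^ l) L]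
    have hterm : ∀ l : Fin L,
        ((n : ℤ) * x (l : ℕ) + (m : ℤ) * y (l : ℕ)) * ((n : ℤ) * (2 * (n : ℤ) - 1)) ^ (l : ℕ)
        = ((n : ℤ) * b l + (m : ℤ) * b' l) * ((n : ℤ) * (2 * (n : ℤ) - 1)) ^ (l : ℕ)
          - ((n : ℤ) * c l + (m : ℤ) * c' l) * ((n : ℤ) * (2 * (n : ℤ) - 1)) ^ (l : ℕ) := by
      intro l
      simp only [hxdef, hydef, dif_pos l.isLt, Fin.eta]
      ring
    rw [Finset.sum_congr rfl (fun l _ => hterm l), Finset.sum_sub_distrib, heq, sub_self]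
  have hz := main8 n m hn hgcd L x y hxb hyb hsum
  constructor
  · funext l
    have h := (hz l l.isLt).1
    simp only [hxdef, dif_pos l.isLt, Fin.eta] at h
    linarith
  · funext l
    have h := (hz l l.isLt).2
    simp only [hydef, dif_pos l.isLt, Fin.eta] at h
    linarith
end

section
/- Let n and s be positive integers, set m = 2s + 1, and assume gcd(n, m) = 1 and 2n < m, and set W = (s + 1)(2s + 1). Then for every positive integer L, the map which sends a pair of digit sequences (b_0, ..., b_{L−1}) and (b'_0, ..., b'_{L−1}), with every b_l and b'_l in {0, 1, ..., s}, to the integer Σ_{l=0}^{L−1} (n·b_l + m·b'_l)·W^l is injective: if Σ_{l=0}^{L−1} (n·b_l + m·b'_l)·W^l = Σ_{l=0}^{L−1} (n·b̃_l + m·b̃'_l)·W^l with all digits in {0, ..., s}, then b_l = b̃_l and b'_l = b̃'_l for all l. -/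
lemma key_aux (n s : ℕ) (hn : 0 < n) (hs : 0 < s)
    (hgcd : Nat.gcd n (2 * s + 1) = 1) :
    ∀ (L : ℕ) (B B' C C' : ℕ → ℤ),
      (∀ l, 0 ≤ B l ∧ B l ≤ (s : ℤ)) → (∀ l, 0 ≤ B' l ∧ B' l ≤ (s : ℤ)) →
      (∀ l, 0 ≤ C l ∧ C l ≤ (s : ℤ)) → (∀ l, 0 ≤ C' l ∧ C' l ≤ (s : ℤ)) →
      (∑ l ∈ Finset.range L, ((n : ℤ) * B l + (2 * (s : ℤ) + 1) * B' l)
              * (((s : ℤ) + 1) * (2 * (s : ℤ) + 1)) ^ l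
        = ∑ l ∈ Finset.range L, ((n : ℤ) * C l + (2 * (s : ℤ) + 1) * C' l)
              * (((s : ℤ) + 1) * (2 * (s : ℤ) + 1)) ^ l) →
      ∀ l < L, B l = C l ∧ B' l = C' l := by
  intro L
  induction L with
  | zero => intro _ _ _ _ _ _ _ _ _ l hl; omega
  | succ L ih =>
    intro B B' C C' hB hB' hC hC' heq l hl
    rw [Finset.sum_range_succ', Finset.sum_range_succ'] at heq
    simp only [pow_succ, pow_zero, one_mul, Nat.cast_zero] at heq
    set S : ℤ := ∑ x ∈ Finset.range L,
        (((n : ℤ) * B (x+1) + (2 * (s : ℤ) + 1) * B' (x+1))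
            * (((s : ℤ) + 1) * (2 * (s : ℤ) + 1)) ^ x
          - ((n : ℤ) * C (x+1) + (2 * (s : ℤ) + 1) * C' (x+1))
            * (((s : ℤ) + 1) * (2 * (s : ℤ) + 1)) ^ x) with hS
    have hkey : (n : ℤ) * (B 0 - C 0) + (2 * (s : ℤ) + 1) * (B' 0 - C' 0)
        + (((s : ℤ) + 1) * (2 * (s : ℤ) + 1)) * S = 0 := by
      have hWS : (((s : ℤ) + 1) * (2 * (s : ℤ) + 1)) * S
          = ∑ x ∈ Finset.range L, ((n : ℤ) * B (x+1) + (2 * (s : ℤ) + 1) * B' (x+1))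
              * ((((s : ℤ) + 1) * (2 * (s : ℤ) + 1)) ^ x * (((s : ℤ) + 1) * (2 * (s : ℤ) + 1)))
            - ∑ x ∈ Finset.range L, ((n : ℤ) * C (x+1) + (2 * (s : ℤ) + 1) * C' (x+1))
              * ((((s : ℤ) + 1) * (2 * (s : ℤ) + 1)) ^ x * (((s : ℤ) + 1) * (2 * (s : ℤ) + 1))) := by
        rw [hS, Finset.mul_sum, ← Finset.sum_sub_distrib]
        refine Finset.sum_congr rfl fun x _ => by ring
      rw [hWS]
      linarith [heq]
    have hcop : IsCoprime ((2 * (s : ℤ) + 1)) ((n : ℤ)) := by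
      rw [show (2 * (s : ℤ) + 1) = ((2 * s + 1 : ℕ) : ℤ) by push_cast; ring,
        Int.isCoprime_iff_gcd_eq_one, Int.gcd_natCast_natCast, Nat.gcd_comm]
      exact hgcd
    have hmdvd : (2 * (s : ℤ) + 1) ∣ (n : ℤ) * (B 0 - C 0) :=
      ⟨-(B' 0 - C' 0) - ((s : ℤ) + 1) * S, by linear_combination hkey⟩
    have hB0 : B 0 = C 0 := by
      have hd : (2 * (s : ℤ) + 1) ∣ (B 0 - C 0) := hcop.dvd_of_dvd_mul_left hmdvd
      have habs : |B 0 - C 0| < 2 * (s : ℤ) + 1 := by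
        rw [abs_lt]
        constructor
        · linarith [(hB 0).1, (hC 0).2]
        · linarith [(hB 0).2, (hC 0).1]
      have := Int.eq_zero_of_abs_lt_dvd hd habs
      linarith
    have hB'0 : B' 0 - C' 0 = -(((s : ℤ) + 1) * S) := by
      have hmne : (2 * (s : ℤ) + 1) ≠ 0 := by positivity
      refine mul_left_cancel₀ hmne ?_
      rw [hB0] at hkey
      linear_combination hkey
    have hS0 : S = 0 := by
      by_contra h
      have h1 : 1 ≤ |S| := Int.one_le_abs (by omega)
      have h2 : |B' 0 - C' 0| = ((s : ℤ) + 1) * |S| := by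
        rw [hB'0, abs_neg, abs_mul, abs_of_nonneg (by positivity : (0:ℤ) ≤ (s : ℤ) + 1)]
      have hle : |B' 0 - C' 0| ≤ s := by
        rw [abs_le]
        constructor
        · linarith [(hB' 0).1, (hC' 0).2]
        · linarith [(hB' 0).2, (hC' 0).1]
      nlinarith
    have hB'0' : B' 0 = C' 0 := by
      have h0 : B' 0 - C' 0 = 0 := by rw [hB'0, hS0]; ring
      linarith
    have hshift : ∀ l < L, B (l+1) = C (l+1) ∧ B' (l+1) = C' (l+1) := by
      apply ih (fun l => B (l+1)) (fun l => B' (l+1)) (fun l => C (l+1)) (fun l => C' (l+1))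
        (fun l => hB _) (fun l => hB' _) (fun l => hC _) (fun l => hC' _)
      have h := hS0
      rw [hS, Finset.sum_sub_distrib, sub_eq_zero] at h
      exact h
    rcases Nat.eq_zero_or_pos l with rfl | hpos
    · exact ⟨hB0, hB'0'⟩
    · obtain ⟨k, rfl⟩ := Nat.exists_eq_succ_of_ne_zero (by omega : l ≠ 0)
      exact hshift k (by omega)

theorem stmt9 (n s : ℕ) (hn : 0 < n) (hs : 0 < s)
    (hgcd : Nat.gcd n (2 * s + 1) = 1) (hlt : 2 * n < 2 * s + 1)
    (L : ℕ) (hL : 0 < L)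
    (b b' c c' : Fin L → ℤ)
    (hb : ∀ l, 0 ≤ b l ∧ b l ≤ (s : ℤ)) (hb' : ∀ l, 0 ≤ b' l ∧ b' l ≤ (s : ℤ))
    (hc : ∀ l, 0 ≤ c l ∧ c l ≤ (s : ℤ)) (hc' : ∀ l, 0 ≤ c' l ∧ c' l ≤ (s : ℤ))
    (heq : ∑ l : Fin L, ((n : ℤ) * b l + (2 * (s : ℤ) + 1) * b' l)
              * (((s : ℤ) + 1) * (2 * (s : ℤ) + 1)) ^ (l : ℕ)
         = ∑ l : Fin L, ((n : ℤ) * c l + (2 * (s : ℤ) + 1) * c' l)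
              * (((s : ℤ) + 1) * (2 * (s : ℤ) + 1)) ^ (l : ℕ)) :
    b = c ∧ b' = c' := by
  classical
  set B : ℕ → ℤ := fun l => if h : l < L then b ⟨l, h⟩ else 0 with hBd
  set B' : ℕ → ℤ := fun l => if h : l < L then b' ⟨l, h⟩ else 0 with hB'd
  set C : ℕ → ℤ := fun l => if h : l < L then c ⟨l, h⟩ else 0 with hCd
  set C' : ℕ → ℤ := fun l => if h : l < L then c' ⟨l, h⟩ else 0 with hC'd
  have hsum : ∑ l ∈ Finset.range L, ((n : ℤ) * B l + (2 * (s : ℤ) + 1) * B' l)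
        * (((s : ℤ) + 1) * (2 * (s : ℤ) + 1)) ^ l
      = ∑ l ∈ Finset.range L, ((n : ℤ) * C l + (2 * (s : ℤ) + 1) * C' l)
        * (((s : ℤ) + 1) * (2 * (s : ℤ) + 1)) ^ l := by
    rw [← Fin.sum_univ_eq_sum_range, ← Fin.sum_univ_eq_sum_range]
    calc _ = ∑ l : Fin L, ((n : ℤ) * b l + (2 * (s : ℤ) + 1) * b' l)
              * (((s : ℤ) + 1) * (2 * (s : ℤ) + 1)) ^ (l : ℕ) := by
            refine Finset.sum_congr rfl fun i _ => ?_
            simp [hBd, hB'd, i.isLt]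
      _ = ∑ l : Fin L, ((n : ℤ) * c l + (2 * (s : ℤ) + 1) * c' l)
              * (((s : ℤ) + 1) * (2 * (s : ℤ) + 1)) ^ (l : ℕ) := heq
      _ = _ := by
            refine Finset.sum_congr rfl fun i _ => ?_
            simp [hCd, hC'd, i.isLt]
  have hkey := key_aux n s hn hs hgcd L B B' C C'
    (fun l => by
      by_cases h : l < L
      · simpa [hBd, h] using hb ⟨l, h⟩
      · simp [hBd, h])
    (fun l => by
      by_cases h : l < L
      · simpa [hB'd, h] using hb' ⟨l, h⟩
      · simp [hB'd, h])
    (fun l => by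
      by_cases h : l < L
      · simpa [hCd, h] using hc ⟨l, h⟩
      · simp [hCd, h])
    (fun l => by
      by_cases h : l < L
      · simpa [hC'd, h] using hc' ⟨l, h⟩
      · simp [hC'd, h])
    hsum
  constructor <;> ext ⟨l, hl⟩
  · have h := (hkey l hl).1; simpa [hBd, hCd, hl] using h
  · have h := (hkey l hl).2; simpa [hB'd, hC'd, hl] using h
end

section
/- Let n and s be positive integers, set m = 2s, and assume gcd(n, m) = 1 and 2n < m (so n < s), and set W = 2s² − n. Then for every positive integer L, the map which sends a pair of digit sequences (b_0, ..., b_{L−1}) and (b'_0, ..., b'_{L−1}), with every b_l and b'_l in {0, 1, ..., s − 1}, to the integer Σ_{l=0}^{L−1} (n·b_l + m·b'_l)·W^l is injective: if Σ_{l=0}^{L−1} (n·b_l + m·b'_l)·W^l = Σ_{l=0}^{L−1} (n·b̃_l + m·b̃'_l)·W^l with all digits in {0, ..., s − 1}, then b_l = b̃_l and b'_l = b̃'_l for all l. -/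
-- ruling out n*e + 2*s*f = W
lemma keyB (n s : ℕ) (hn : 0 < n) (hs : 0 < s)
    (hgcd : Nat.gcd n (2 * s) = 1)
    (e f : ℤ) (he : |e| ≤ (s : ℤ) - 1) (hf : |f| ≤ (s : ℤ) - 1)
    (hk : (n : ℤ) * e + 2 * s * f = 2 * (s : ℤ) ^ 2 - n) : False := by
  have hcop : IsCoprime (n : ℤ) (2 * (s : ℤ)) := by
    rw [Int.isCoprime_iff_gcd_eq_one, show (2 * (s : ℤ)) = ((2 * s : ℕ) : ℤ) by push_cast; ring,
      Int.gcd_natCast_natCast]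
    exact hgcd
  have h1 : (2 * (s : ℤ)) ∣ (n : ℤ) * (e + 1) := ⟨(s : ℤ) - f, by ring_nf; linarith [hk]⟩
  have h2 : (2 * (s : ℤ)) ∣ (e + 1) := hcop.symm.dvd_of_dvd_mul_left h1
  obtain ⟨d, hd⟩ := h2
  have hne : (n : ℤ) * (e + 1) = 2 * (s : ℤ) * ((s : ℤ) - f) := by ring_nf; linarith [hk]
  have hnd : (n : ℤ) * d = (s : ℤ) - f := by
    have h2s : (0:ℤ) < 2 * s := by positivity
    have : 2 * (s:ℤ) * ((n:ℤ) * d) = 2 * (s:ℤ) * ((s:ℤ) - f) := by rw [← hne, hd]; ring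
    exact mul_left_cancel₀ (ne_of_gt h2s) this
  have hsf : (1:ℤ) ≤ (s : ℤ) - f := by
    have := abs_le.mp hf; linarith [this.2]
  have hd1 : 1 ≤ d := by
    by_contra h
    push_neg at h
    have : (n:ℤ) * d ≤ 0 := mul_nonpos_of_nonneg_of_nonpos (by positivity) (by omega)
    omega
  have he' := abs_le.mp he
  have : e + 1 ≥ 2 * (s:ℤ) := by
    calc e + 1 = 2 * (s:ℤ) * d := hd
    _ ≥ 2 * (s:ℤ) * 1 := by
        have : (0:ℤ) ≤ 2 * s := by positivity
        exact mul_le_mul_of_nonneg_left hd1 this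
    _ = 2 * s := by ring
  linarith [he'.2]

lemma keyA (n s : ℕ) (hn : 0 < n) (hs : 0 < s)
    (hgcd : Nat.gcd n (2 * s) = 1) (hlt : n < 2 * s)
    (e f : ℤ) (he : |e| ≤ (s : ℤ) - 1) (hf : |f| ≤ (s : ℤ) - 1)
    (hdvd : (2 * (s : ℤ) ^ 2 - n) ∣ ((n : ℤ) * e + 2 * s * f)) : e = 0 ∧ f = 0 := by
  have hs1 : (1:ℤ) ≤ s := by exact_mod_cast hs
  have hn1 : (1:ℤ) ≤ n := by exact_mod_cast hn
  have hlt' : (n:ℤ) < 2 * s := by exact_mod_cast hlt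
  set W : ℤ := 2 * (s : ℤ) ^ 2 - n with hWdef
  have hW : 0 < W := by nlinarith
  obtain ⟨k, hk⟩ := hdvd
  have he' := abs_le.mp he
  have hf' := abs_le.mp hf
  have hbound : |(n : ℤ) * e + 2 * s * f| < 2 * W := by
    rw [abs_lt]
    constructor <;> nlinarith [he'.1, he'.2, hf'.1, hf'.2]
  have hkabs : |k| ≤ 1 := by
    by_contra h
    push_neg at h
    have h2 : 2 ≤ |k| := by omega
    have : 2 * W ≤ |W * k| := by
      rw [abs_mul, abs_of_pos hW]
      nlinarith
    rw [hk] at hbound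
    linarith
  have hk3 : k = -1 ∨ k = 0 ∨ k = 1 := by
    have := abs_le.mp hkabs; omega
  rcases hk3 with h | h | h
  · exfalso
    apply keyB n s hn hs hgcd (-e) (-f) (by simpa using he) (by simpa using hf)
    rw [h] at hk
    linarith [hk]
  · -- x = 0 case
    rw [h, mul_zero] at hk
    have hcop : IsCoprime (n : ℤ) (2 * (s : ℤ)) := by
      rw [Int.isCoprime_iff_gcd_eq_one, show (2 * (s : ℤ)) = ((2 * s : ℕ) : ℤ) by push_cast; ring,
        Int.gcd_natCast_natCast]
      exact hgcd
    have h1 : (2 * (s : ℤ)) ∣ (n : ℤ) * e := ⟨-f, by linarith [hk]⟩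
    have h2 : (2 * (s : ℤ)) ∣ e := hcop.symm.dvd_of_dvd_mul_left h1
    obtain ⟨d, hd⟩ := h2
    have hd0 : d = 0 := by
      by_contra hd0
      have : 1 ≤ |d| := by
        rcases lt_trichotomy d 0 with h' | h' | h'
        · rw [abs_of_neg h']; omega
        · exact absurd h' hd0
        · rw [abs_of_pos h']; omega
      have : 2 * (s:ℤ) ≤ |e| := by
        rw [hd, abs_mul, abs_of_pos (show (0:ℤ) < 2*s by positivity)]
        nlinarith
      linarith
    have he0 : e = 0 := by rw [hd, hd0, mul_zero]
    constructor
    · exact he0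
    · rw [he0, mul_zero, zero_add] at hk
      have : (0:ℤ) < 2 * s := by positivity
      rcases mul_eq_zero.mp hk with h' | h'
      · linarith
      · exact h'
  · exfalso
    apply keyB n s hn hs hgcd e f he hf
    rw [h, mul_one] at hk
    linarith [hk]

lemma mainlem (n s : ℕ) (hn : 0 < n) (hs : 0 < s)
    (hgcd : Nat.gcd n (2 * s) = 1) (hlt : n < 2 * s) :
    ∀ L : ℕ, ∀ e f : ℕ → ℤ, (∀ l, |e l| ≤ (s : ℤ) - 1) → (∀ l, |f l| ≤ (s : ℤ) - 1) →
    (∑ l ∈ Finset.range L, ((n : ℤ) * e l + 2 * s * f l) * (2 * (s : ℤ) ^ 2 - n) ^ l = 0) →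
    ∀ l < L, e l = 0 ∧ f l = 0 := by
  intro L
  induction L with
  | zero => intro e f _ _ _ l hl; omega
  | succ L ih =>
    intro e f he hf hsum l hl
    set W : ℤ := 2 * (s : ℤ) ^ 2 - n with hWdef
    have hW : 0 < W := by
      have hs1 : (1:ℤ) ≤ s := by exact_mod_cast hs
      have hlt' : (n:ℤ) < 2 * s := by exact_mod_cast hlt
      nlinarith
    have hsplit : ∑ i ∈ Finset.range (L+1), ((n : ℤ) * e i + 2 * s * f i) * W ^ i
        = (∑ i ∈ Finset.range L, ((n : ℤ) * e (i+1) + 2 * s * f (i+1)) * W ^ i) * W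
          + ((n : ℤ) * e 0 + 2 * s * f 0) := by
      have hterm : ∀ i ∈ Finset.range L, ((n : ℤ) * e (i+1) + 2 * s * f (i+1)) * W ^ (i+1)
          = (((n : ℤ) * e (i+1) + 2 * s * f (i+1)) * W ^ i) * W := by
        intro i _; rw [pow_succ]; ring
      rw [Finset.sum_range_succ' (fun i => ((n : ℤ) * e i + 2 * s * f i) * W ^ i) L,
        Finset.sum_congr rfl hterm, ← Finset.sum_mul, pow_zero, mul_one]
    rw [hsplit] at hsum
    set S := ∑ i ∈ Finset.range L, ((n : ℤ) * e (i+1) + 2 * s * f (i+1)) * W ^ i with hS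
    have hdvd : W ∣ ((n : ℤ) * e 0 + 2 * s * f 0) := ⟨-S, by linarith⟩
    obtain ⟨he0, hf0⟩ := keyA n s hn hs hgcd hlt (e 0) (f 0) (he 0) (hf 0) hdvd
    have hS0 : S = 0 := by
      have : S * W = 0 := by rw [he0, hf0] at hsum; linarith [hsum]
      rcases mul_eq_zero.mp this with h | h
      · exact h
      · linarith
    have hih := ih (fun i => e (i+1)) (fun i => f (i+1)) (fun i => he (i+1)) (fun i => hf (i+1)) hS0
    rcases Nat.eq_zero_or_pos l with h | h
    · subst h; exact ⟨he0, hf0⟩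
    · obtain ⟨k, rfl⟩ := Nat.exists_eq_add_of_lt h
      simp only [Nat.zero_add] at *
      exact hih k (by omega)

theorem stmt10 (n s : ℕ) (hn : 0 < n) (hs : 0 < s)
    (hgcd : Nat.gcd n (2 * s) = 1) (hlt : 2 * n < 2 * s)
    (L : ℕ) (hL : 0 < L)
    (b b' c c' : Fin L → ℤ)
    (hb : ∀ l, 0 ≤ b l ∧ b l ≤ (s : ℤ) - 1) (hb' : ∀ l, 0 ≤ b' l ∧ b' l ≤ (s : ℤ) - 1)
    (hc : ∀ l, 0 ≤ c l ∧ c l ≤ (s : ℤ) - 1) (hc' : ∀ l, 0 ≤ c' l ∧ c' l ≤ (s : ℤ) - 1)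
    (heq : ∑ l : Fin L, ((n : ℤ) * b l + 2 * (s : ℤ) * b' l)
              * (2 * (s : ℤ) ^ 2 - (n : ℤ)) ^ (l : ℕ)
         = ∑ l : Fin L, ((n : ℤ) * c l + 2 * (s : ℤ) * c' l)
              * (2 * (s : ℤ) ^ 2 - (n : ℤ)) ^ (l : ℕ)) :
    b = c ∧ b' = c' := by
  have hlt' : n < 2 * s := by omega
  set E : ℕ → ℤ := fun l => if h : l < L then b ⟨l, h⟩ - c ⟨l, h⟩ else 0 with hE
  set F : ℕ → ℤ := fun l => if h : l < L then b' ⟨l, h⟩ - c' ⟨l, h⟩ else 0 with hF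
  have hEb : ∀ l, |E l| ≤ (s : ℤ) - 1 := by
    intro l
    rw [hE]
    by_cases h : l < L
    · simp only [dif_pos h]
      have h1 := hb ⟨l, h⟩; have h2 := hc ⟨l, h⟩
      rw [abs_le]; constructor <;> omega
    · simp only [dif_neg h]
      have h1 := hb ⟨0, hL⟩
      simp only [abs_zero]; omega
  have hFb : ∀ l, |F l| ≤ (s : ℤ) - 1 := by
    intro l
    rw [hF]
    by_cases h : l < L
    · simp only [dif_pos h]
      have h1 := hb' ⟨l, h⟩; have h2 := hc' ⟨l, h⟩
      rw [abs_le]; constructor <;> omega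
    · simp only [dif_neg h]
      have h1 := hb' ⟨0, hL⟩
      simp only [abs_zero]; omega
  have hsum : ∑ l ∈ Finset.range L, ((n : ℤ) * E l + 2 * s * F l) * (2 * (s : ℤ) ^ 2 - n) ^ l = 0 := by
    rw [← Fin.sum_univ_eq_sum_range (fun l => ((n : ℤ) * E l + 2 * s * F l) * (2 * (s : ℤ) ^ 2 - n) ^ l) L]
    have : ∀ i : Fin L, ((n : ℤ) * E i + 2 * s * F i) * (2 * (s : ℤ) ^ 2 - n) ^ (i : ℕ)
        = ((n : ℤ) * b i + 2 * (s : ℤ) * b' i) * (2 * (s : ℤ) ^ 2 - (n : ℤ)) ^ (i : ℕ)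
          - ((n : ℤ) * c i + 2 * (s : ℤ) * c' i) * (2 * (s : ℤ) ^ 2 - (n : ℤ)) ^ (i : ℕ) := by
      intro i
      rw [hE, hF]
      simp only [dif_pos i.isLt, Fin.eta]
      ring
    rw [Finset.sum_congr rfl (fun i _ => this i), Finset.sum_sub_distrib, heq, sub_self]
  have hmain := mainlem n s hn hs hgcd hlt' L E F hEb hFb hsum
  constructor <;> funext i
  · have := (hmain i i.isLt).1
    rw [hE] at this
    simp only [dif_pos i.isLt, Fin.eta] at this
    linarith
  · have := (hmain i i.isLt).2
    rw [hF] at this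
    simp only [dif_pos i.isLt, Fin.eta] at this
    linarith
end

section
/- Let n and m be positive integers with gcd(n, m) = 1, and let b, b̃, b', b̃' be integers in {0, 1, ..., n − 1}, and let c be an integer. If n(b − b̃) + m(b' − b̃') = c · n(2n − 1), then c = 0, b = b̃, and b' = b̃'. -/
theorem stmt11 (n m : ℕ) (hn : 0 < n) (hm : 0 < m) (hgcd : Nat.gcd n m = 1)
    (b bt b' bt' : ℤ)
    (hb : 0 ≤ b ∧ b ≤ (n : ℤ) - 1) (hbt : 0 ≤ bt ∧ bt ≤ (n : ℤ) - 1)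
    (hb' : 0 ≤ b' ∧ b' ≤ (n : ℤ) - 1) (hbt' : 0 ≤ bt' ∧ bt' ≤ (n : ℤ) - 1)
    (c : ℤ)
    (heq : (n : ℤ) * (b - bt) + (m : ℤ) * (b' - bt')
         = c * ((n : ℤ) * (2 * (n : ℤ) - 1))) :
    c = 0 ∧ b = bt ∧ b' = bt' := by
  have hcop : IsCoprime (n : ℤ) (m : ℤ) := by
    rw [Int.isCoprime_iff_gcd_eq_one]; exact_mod_cast hgcd
  have hdvd : (n : ℤ) ∣ (m : ℤ) * (b' - bt') := by
    refine ⟨c * (2 * (n : ℤ) - 1) - (b - bt), ?_⟩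
    linarith [heq]
  have hdvd' : (n : ℤ) ∣ (b' - bt') := hcop.dvd_of_dvd_mul_left hdvd
  have habs : |b' - bt'| < (n : ℤ) := by
    rw [abs_lt]; constructor <;> linarith [hb'.1, hb'.2, hbt'.1, hbt'.2]
  have h1 : b' - bt' = 0 := Int.eq_zero_of_abs_lt_dvd hdvd' habs
  have heq2 : (b - bt) = c * (2 * (n : ℤ) - 1) := by
    have hn' : (n : ℤ) ≠ 0 := by positivity
    have : (n : ℤ) * (b - bt) = (n : ℤ) * (c * (2 * (n : ℤ) - 1)) := by
      rw [h1] at heq; linarith [heq]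
    exact mul_left_cancel₀ hn' this
  have hc : c = 0 := by
    by_contra hc0
    have h2n : (1 : ℤ) ≤ 2 * (n : ℤ) - 1 := by
      have : (1 : ℤ) ≤ (n : ℤ) := by exact_mod_cast hn
      linarith
    have h1c : 1 ≤ |c| := Int.one_le_abs hc0
    have : |b - bt| = |c| * |2 * (n : ℤ) - 1| := by rw [heq2, abs_mul]
    have habs2 : |b - bt| ≤ (n : ℤ) - 1 := by
      rw [abs_le]; constructor <;> linarith [hb.1, hb.2, hbt.1, hbt.2]
    have : 2 * (n : ℤ) - 1 ≤ |b - bt| := by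
      rw [this, abs_of_nonneg (by linarith : (0:ℤ) ≤ 2 * (n:ℤ) - 1)]
      nlinarith
    linarith
  refine ⟨hc, by rw [hc] at heq2; linarith, by linarith⟩
end

section
/- Let n and s be positive integers with n < s and gcd(n, 2s) = 1. Then there are no integers b_0, b̃_0, b'_0, b̃'_0, all belonging to {0, 1, ..., s − 1}, satisfying the equation n(b_0 − b̃_0 + 1) + 2s(b'_0 − b̃'_0) = 2s². -/
theorem stmt12 (n s : ℕ) (hn : 0 < n) (hs : 0 < s) (hns : n < s)
    (hgcd : Nat.gcd n (2 * s) = 1) :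
    ¬ ∃ b bt b' bt' : ℤ,
        (0 ≤ b ∧ b ≤ (s : ℤ) - 1) ∧ (0 ≤ bt ∧ bt ≤ (s : ℤ) - 1) ∧
        (0 ≤ b' ∧ b' ≤ (s : ℤ) - 1) ∧ (0 ≤ bt' ∧ bt' ≤ (s : ℤ) - 1) ∧
        (n : ℤ) * (b - bt + 1) + 2 * (s : ℤ) * (b' - bt') = 2 * (s : ℤ) ^ 2 := by
  rintro ⟨b, bt, b', bt', ⟨hb0, hb1⟩, ⟨ht0, ht1⟩, ⟨hb'0, hb'1⟩, ⟨ht'0, ht'1⟩, heq⟩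
  have hco : IsCoprime (2 * (s : ℤ)) (n : ℤ) := by
    rw [Int.isCoprime_iff_gcd_eq_one]
    have : (2 * (s : ℤ)) = ((2 * s : ℕ) : ℤ) := by push_cast; ring
    rw [this, Int.gcd_natCast_natCast, Nat.gcd_comm]
    exact hgcd
  have hdvd : (2 * (s : ℤ)) ∣ (n : ℤ) * (b - bt + 1) :=
    ⟨(s : ℤ) - (b' - bt'), by linarith [heq]⟩
  have hdvd2 : (2 * (s : ℤ)) ∣ (b - bt + 1) := hco.dvd_of_dvd_mul_left hdvd
  have hzero : b - bt + 1 = 0 := by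
    rcases hdvd2 with ⟨k, hk⟩
    have hs' : (0 : ℤ) < s := by exact_mod_cast hs
    have : k = 0 := by nlinarith
    rw [hk, this, mul_zero]
  have hs' : (0 : ℤ) < s := by exact_mod_cast hs
  rw [hzero, mul_zero, zero_add] at heq
  nlinarith
end

section
/- Let K ≥ 2 be an integer and let ψ : ℕ → (0, ∞) satisfy Σ_{q=1}^{∞} q^{K−2}·ψ(q) < ∞. Then the set 𝒜_{K−1}(ψ) of tuples (h_1, ..., h_{K−1}) ∈ ℝ^{K−1} such that the inequality |p + q_1·h_1 + q_2·h_2 + ... + q_{K−1}·h_{K−1}| < ψ(|q|_∞) holds for infinitely many pairs (p, q) with p ∈ ℤ and q = (q_1, ..., q_{K−1}) ∈ ℤ^{K−1} \ {0} has (K−1)-dimensional Lebesgue measure zero. -/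
/-! Borel–Cantelli. For `q ≠ 0` let `A_q` be the set of `h` with `|p + q · h| < ψ(|q|_∞)` for some
integer `p`. Slicing along a coordinate `i` with `q i ≠ 0` shows that `A_q` meets every unit cube in
measure at most `8 ψ(|q|_∞)`, and there are at most `2 (n + 1) (2 m + 1) ^ n` vectors `q ∈ ℤ^(n+1)`
with `|q|_∞ = m`, so the hypothesis makes `∑_q vol (A_q ∩ cube)` finite. Since each `q` admits only
finitely many `p`, a point with infinitely many solutions `(p, q)` lies in infinitely many `A_q`,
i.e. in `limsup A_q`, which is therefore null. -/

open MeasureTheory Set Filter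
open scoped ENNReal

namespace Int

lemma card_Icc_ceil_floor_le {l u : ℝ} (h : l ≤ u + 1) :
    ((Finset.Icc ⌈l⌉ ⌊u⌋).card : ℝ) ≤ u - l + 1 := by
  rw [Int.card_Icc, ← Int.cast_natCast, Int.toNat_eq_max]
  push_cast
  exact max_le (by linarith [Int.floor_le u, Int.le_ceil l]) (by linarith)

lemma mem_Icc_ceil_floor_of_abs_add_lt {p : ℤ} {x ε : ℝ} (h : |p + x| < ε) :
    p ∈ Finset.Icc ⌈-x - ε⌉ ⌊-x + ε⌋ := by
  obtain ⟨h₁, h₂⟩ := abs_lt.1 h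
  exact Finset.mem_Icc.2 ⟨Int.ceil_le.2 (by linarith), Int.le_floor.2 (by linarith)⟩

lemma finite_setOf_abs_add_lt (x ε : ℝ) : {p : ℤ | |p + x| < ε}.Finite :=
  (Finset.Icc _ _).finite_toSet.subset fun _ hp => mem_Icc_ceil_floor_of_abs_add_lt hp

end Int

lemma volume_setOf_abs_int_add_mul_add_lt_le {a : ℤ} (ha : a ≠ 0) (b c : ℝ) {ε : ℝ}
    (hε : 0 ≤ ε) :
    volume {x ∈ Icc c (c + 1) | ∃ p : ℤ, |(p : ℝ) + (a * x + b)| < ε} ≤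
      ENNReal.ofReal (8 * ε) := by
  set E := {x ∈ Icc c (c + 1) | ∃ p : ℤ, |(p : ℝ) + (a * x + b)| < ε}
  rcases lt_or_ge (1 / 2) ε with hε₂ | hε₂
  · calc volume E ≤ volume (Icc c (c + 1)) := measure_mono fun x hx => hx.1
      _ ≤ ENNReal.ofReal (8 * ε) := by
        rw [Real.volume_Icc]; exact ENNReal.ofReal_le_ofReal (by linarith)
  have ha₁ : (1 : ℝ) ≤ |(a : ℝ)| := by
    rw [← Int.cast_abs]; exact_mod_cast Int.one_le_abs ha
  have ha₀ : (0 : ℝ) < |(a : ℝ)| := by linarith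
  set y₀ := a * c + b
  set P := Finset.Icc ⌈-y₀ - (ε + |(a : ℝ)|)⌉ ⌊-y₀ + (ε + |(a : ℝ)|)⌋
  have hE : E ⊆ ⋃ p ∈ P, Metric.ball ((-p - b) / a) (ε / |(a : ℝ)|) := by
    rintro x ⟨hx, p, hp⟩
    have hax : |a * x + b - y₀| ≤ |(a : ℝ)| := by
      rw [show a * x + b - y₀ = a * (x - c) by ring, abs_mul, abs_of_nonneg (sub_nonneg.2 hx.1)]
      exact mul_le_of_le_one_right (abs_nonneg _) (by linarith [hx.2])
    refine mem_biUnion (Int.mem_Icc_ceil_floor_of_abs_add_lt (p := p) ?_) ?_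
    · calc |p + y₀| = |(p + (a * x + b)) - (a * x + b - y₀)| := by ring_nf
        _ ≤ |p + (a * x + b)| + |a * x + b - y₀| := abs_sub _ _
        _ < ε + |(a : ℝ)| := by linarith
    · rw [Metric.mem_ball, Real.dist_eq, lt_div_iff₀ ha₀, ← abs_mul,
        show (x - (-p - b) / a) * a = p + (a * x + b) by field_simp; ring]
      exact hp
  have hcard : (P.card : ℝ) ≤ 2 * (ε + |(a : ℝ)|) + 1 := by
    have := Int.card_Icc_ceil_floor_le (l := -y₀ - (ε + |(a : ℝ)|)) (u := -y₀ + (ε + |(a : ℝ)|))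
      (by linarith)
    linarith
  calc volume E ≤ ∑ p ∈ P, volume (Metric.ball ((-p - b) / a : ℝ) (ε / |(a : ℝ)|)) :=
        (measure_mono hE).trans (measure_biUnion_finset_le P _)
    _ = ENNReal.ofReal (P.card * (2 * (ε / |(a : ℝ)|))) := by
        simp [Real.volume_ball, ENNReal.ofReal_mul]
    _ ≤ ENNReal.ofReal (8 * ε) := by
        refine ENNReal.ofReal_le_ofReal ?_
        calc (P.card : ℝ) * (2 * (ε / |(a : ℝ)|))
            ≤ (2 * (ε + |(a : ℝ)|) + 1) * (2 * (ε / |(a : ℝ)|)) := by gcongr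
          _ = 4 * ε + (2 * ε + 1) * (2 * ε) / |(a : ℝ)| := by field_simp; ring
          _ ≤ 4 * ε + (2 * ε + 1) * (2 * ε) := by
            gcongr; exact div_le_self (by positivity) ha₁
          _ ≤ 8 * ε := by nlinarith

lemma MeasureTheory.Measure.prod_apply_le_of_forall_slice_le {α β : Type*} [MeasurableSpace α]
    [MeasurableSpace β] {μ : Measure α} {ν : Measure β} [SFinite μ] [SFinite ν]
    {s : Set (α × β)} (hs : MeasurableSet s) {t : Set β} (ht : MeasurableSet t)
    (hst : ∀ z ∈ s, z.2 ∈ t) {B : ℝ≥0∞} (hB : ∀ y ∈ t, μ ((·, y) ⁻¹' s) ≤ B) :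
    μ.prod ν s ≤ B * ν t := by
  rw [Measure.prod_apply_symm hs, ← lintegral_indicator_const ht]
  refine lintegral_mono fun y => ?_
  by_cases hy : y ∈ t
  · simpa [indicator_of_mem hy] using hB y hy
  · have : (·, y) ⁻¹' s = ∅ := eq_empty_of_forall_notMem fun x hx => hy (hst _ hx)
    simp [this]

lemma isOpen_setOf_exists_abs_int_add_lt {E : Type*} [TopologicalSpace E] {f : E → ℝ}
    (hf : Continuous f) (ε : ℝ) : IsOpen {x | ∃ p : ℤ, |p + f x| < ε} := by
  simp only [ofPred_exists]
  exact isOpen_iUnion fun p => isOpen_lt (by fun_prop) continuous_const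

lemma volume_setOf_abs_int_add_sum_lt_inter_pi_le {n : ℕ} {q : Fin (n + 1) → ℤ} (hq : q ≠ 0)
    (c : Fin (n + 1) → ℝ) {ε : ℝ} (hε : 0 ≤ ε) :
    volume ({h | ∃ p : ℤ, |(p : ℝ) + ∑ k, (q k : ℝ) * h k| < ε} ∩
      univ.pi fun k => Icc (c k) (c k + 1)) ≤ ENNReal.ofReal (8 * ε) := by
  obtain ⟨i, hi⟩ : ∃ i, q i ≠ 0 := Function.ne_iff.1 hq
  set S := {h : Fin (n + 1) → ℝ | ∃ p : ℤ, |(p : ℝ) + ∑ k, (q k : ℝ) * h k| < ε} ∩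
    univ.pi fun k => Icc (c k) (c k + 1)
  have hS : MeasurableSet S :=
    (isOpen_setOf_exists_abs_int_add_lt (by fun_prop) ε).measurableSet.inter
      (MeasurableSet.univ_pi fun _ => measurableSet_Icc)
  let e := MeasurableEquiv.piFinSuccAbove (fun _ : Fin (n + 1) => ℝ) i
  have he (x : ℝ) (y : Fin n → ℝ) : e.symm (x, y) = i.insertNth x y := rfl
  have hsum (x : ℝ) (y : Fin n → ℝ) : ∑ k, q k * i.insertNth (α := fun _ => ℝ) x y k =
      q i * x + ∑ j, q (i.succAbove j) * y j := by
    simp [Fin.sum_univ_succAbove _ i]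
  let t : Set (Fin n → ℝ) := univ.pi fun j => Icc (c (i.succAbove j)) (c (i.succAbove j) + 1)
  calc volume S = volume (e.symm ⁻¹' S) :=
        ((volume_preserving_piFinSuccAbove (fun _ => ℝ) i).symm.measure_preimage_equiv S).symm
    _ = (volume.prod volume) (e.symm ⁻¹' S) := by rw [Measure.volume_eq_prod]
    _ ≤ ENNReal.ofReal (8 * ε) * volume t := by
        refine Measure.prod_apply_le_of_forall_slice_le (e.symm.measurable hS)
          (MeasurableSet.univ_pi fun _ => measurableSet_Icc) ?_ fun y _ => ?_
        · rintro ⟨x, y⟩ ⟨-, hc⟩ j -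
          simpa [he] using hc (i.succAbove j) trivial
        · refine (measure_mono fun x hx => ?_).trans
            (volume_setOf_abs_int_add_mul_add_lt_le hi (∑ j, q (i.succAbove j) * y j) (c i) hε)
          obtain ⟨⟨p, hp⟩, hc⟩ := hx
          refine ⟨by simpa [he] using hc i trivial, p, ?_⟩
          rwa [he, hsum] at hp
    _ = ENNReal.ofReal (8 * ε) := by simp only [t, volume_pi_pi, Real.volume_Icc]; simp

def supNatAbs {ι : Type*} [Fintype ι] (q : ι → ℤ) : ℕ :=
  Finset.univ.sup fun k => (q k).natAbs

section Counting

open Finset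

variable {ι : Type*} [Fintype ι]

lemma natAbs_le_supNatAbs (q : ι → ℤ) (k : ι) : (q k).natAbs ≤ supNatAbs q :=
  le_sup (f := fun k => (q k).natAbs) (mem_univ k)

lemma exists_natAbs_eq_supNatAbs [Nonempty ι] (q : ι → ℤ) : ∃ k, (q k).natAbs = supNatAbs q :=
  let ⟨k, _, hk⟩ := exists_mem_eq_sup univ univ_nonempty fun k => (q k).natAbs
  ⟨k, hk.symm⟩

lemma card_filter_supNatAbs_eq_le [DecidableEq ι] [Nonempty ι] (m : ℕ) :
    #{q ∈ Fintype.piFinset fun _ : ι => Icc (-m : ℤ) m | supNatAbs q = m} ≤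
      2 * Fintype.card ι * (2 * m + 1) ^ (Fintype.card ι - 1) := by
  set d := Fintype.card ι
  have hd : 1 ≤ d := Fintype.card_pos
  let box (m : ℕ) : Finset (ι → ℤ) := Fintype.piFinset fun _ => Icc (-m : ℤ) m
  have hbox (m : ℕ) : #(box m) = (2 * m + 1) ^ d := by
    simp only [box, Fintype.card_piFinset, Int.card_Icc, prod_const, card_univ]
    congr 1; omega
  rcases m with _ | k
  · calc _ ≤ #(box 0) := card_filter_le _ _
      _ ≤ 2 * d * (2 * 0 + 1) ^ (d - 1) := by
          rw [hbox, mul_zero, zero_add, one_pow, one_pow]; omega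
  · have hsub : box k ⊆ box (k + 1) := by
      intro q
      simp only [box, Fintype.mem_piFinset, Finset.mem_Icc]
      intro h j
      have := h j
      omega
    calc _ ≤ #(box (k + 1) \ box k) := by
          refine card_le_card fun q hq => ?_
          simp only [mem_filter, box, Fintype.mem_piFinset, Finset.mem_Icc, Finset.mem_sdiff]
            at hq ⊢
          obtain ⟨j, hj⟩ := exists_natAbs_eq_supNatAbs q
          exact ⟨hq.1, fun h => by have := h j; omega⟩
      _ = (2 * k + 3) ^ d - (2 * k + 1) ^ d := by
          rw [card_sdiff_of_subset hsub, hbox, hbox]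
          ring_nf
      _ ≤ 2 * d * (2 * (k + 1) + 1) ^ (d - 1) := by
          have := abs_pow_sub_pow_le (α := ℤ) (2 * k + 3) (2 * k + 1) d
          grind

lemma tsum_comp_supNatAbs_le [Nonempty ι] (g : ℕ → ℝ≥0∞) :
    ∑' q : ι → ℤ, g (supNatAbs q) ≤
      ∑' m : ℕ, ((2 * Fintype.card ι * (2 * m + 1) ^ (Fintype.card ι - 1) : ℕ) : ℝ≥0∞) * g m := by
  classical
  rw [← ENNReal.tsum_fiberwise _ supNatAbs]
  refine ENNReal.tsum_le_tsum fun m => ?_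
  have hfiber : supNatAbs (ι := ι) ⁻¹' {m} =
      ↑{q ∈ Fintype.piFinset fun _ : ι => Icc (-m : ℤ) m | supNatAbs q = m} := by
    ext q
    simp only [Set.mem_preimage, Set.mem_singleton_iff, coe_filter, Fintype.mem_piFinset,
      Finset.mem_Icc, Set.mem_ofPred_eq, iff_and_self]
    intro hq k
    have := natAbs_le_supNatAbs q k
    omega
  calc ∑' q : ↑(supNatAbs ⁻¹' {m}), g (supNatAbs q.1) = ∑' q : ↑(supNatAbs ⁻¹' {m}), g m :=
        tsum_congr fun q => congrArg g q.2
    _ = _ := by rw [hfiber, Finset.tsum_subtype' _ fun _ => g m, sum_const, nsmul_eq_mul]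
    _ ≤ _ := by gcongr; exact_mod_cast card_filter_supNatAbs_eq_le m

lemma tsum_ofReal_comp_supNatAbs_ne_top [Nonempty ι] {ψ : ℕ → ℝ}
    (hsum : Summable fun m : ℕ => (m : ℝ) ^ (Fintype.card ι - 1) * ψ m) :
    ∑' q : ι → ℤ, ENNReal.ofReal (ψ (supNatAbs q)) ≠ ∞ := by
  have hbig : (fun m : ℕ => (2 * m + 1 : ℝ)) =O[atTop] fun m : ℕ => (m : ℝ) :=
    Asymptotics.IsBigO.of_bound 3 <| (eventually_ge_atTop 1).mono fun m hm => by
      have : (1 : ℝ) ≤ m := by exact_mod_cast hm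
      rw [Real.norm_of_nonneg (by positivity), Real.norm_of_nonneg (by positivity)]
      linarith
  have hsum' : Summable fun m : ℕ =>
      2 * Fintype.card ι * ((2 * m + 1 : ℝ) ^ (Fintype.card ι - 1) * ψ m) :=
    (summable_of_isBigO_nat hsum ((hbig.pow _).mul (Asymptotics.isBigO_refl _ _))).mul_left _
  refine ne_top_of_le_ne_top hsum'.tsum_ofReal_ne_top ?_
  refine (tsum_comp_supNatAbs_le (ι := ι) fun m => ENNReal.ofReal (ψ m)).trans_eq
    (tsum_congr fun m => ?_)
  rw [← ENNReal.ofReal_natCast, ← ENNReal.ofReal_mul (by positivity)]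
  push_cast
  ring_nf

end Counting

def approxSet {ι : Type*} [Fintype ι] (ψ : ℕ → ℝ) (q : ι → ℤ) : Set (ι → ℝ) :=
  {h | ∃ p : ℤ, |(p : ℝ) + ∑ k, (q k : ℝ) * h k| < ψ (supNatAbs q)}

lemma setOf_infinite_subset_limsup_approxSet {ι : Type*} [Fintype ι] (ψ : ℕ → ℝ) :
    {h : ι → ℝ | {pq : ℤ × (ι → ℤ) | pq.2 ≠ 0 ∧
      |(pq.1 : ℝ) + ∑ k, (pq.2 k : ℝ) * h k| < ψ (supNatAbs pq.2)}.Infinite} ⊆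
      limsup (fun q : {q : ι → ℤ // q ≠ 0} => approxSet ψ q.1) cofinite := by
  intro h hP
  rw [mem_limsup_iff_frequently_mem, frequently_cofinite_iff_infinite]
  set P := {pq : ℤ × (ι → ℤ) | pq.2 ≠ 0 ∧
      |(pq.1 : ℝ) + ∑ k, (pq.2 k : ℝ) * h k| < ψ (supNatAbs pq.2)}
  have hfiber (q : ι → ℤ) : (P ∩ Prod.snd ⁻¹' {q}).Finite :=
    ((Int.finite_setOf_abs_add_lt (∑ k, (q k : ℝ) * h k) (ψ (supNatAbs q))).image (·, q)).subset
      fun ⟨p, q'⟩ ⟨⟨_, hp⟩, hq'⟩ => by cases hq'; exact ⟨p, hp, rfl⟩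
  have hq : (Prod.snd '' P).Infinite := fun hfin =>
    hP (hfin.of_finite_fibers _ fun q _ => hfiber q)
  refine Infinite.of_image Subtype.val (hq.mono ?_)
  rintro _ ⟨⟨p, q⟩, ⟨hq, hp⟩, rfl⟩
  exact ⟨⟨q, hq⟩, ⟨p, hp⟩, rfl⟩

lemma tsum_volume_approxSet_inter_pi_ne_top {n : ℕ} {ψ : ℕ → ℝ} (hψ : ∀ m, 0 ≤ ψ m)
    (hsum : Summable fun m : ℕ => (m : ℝ) ^ n * ψ m) (c : Fin (n + 1) → ℝ) :
    ∑' q : {q : Fin (n + 1) → ℤ // q ≠ 0},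
      volume (approxSet ψ q.1 ∩ univ.pi fun k => Icc (c k) (c k + 1)) ≠ ∞ := by
  have hsum₈ : Summable fun m : ℕ => (m : ℝ) ^ (Fintype.card (Fin (n + 1)) - 1) * (8 * ψ m) := by
    simpa only [Fintype.card_fin, Nat.add_sub_cancel, mul_left_comm] using hsum.mul_left 8
  refine ne_top_of_le_ne_top (tsum_ofReal_comp_supNatAbs_ne_top hsum₈) ?_
  calc _ ≤ ∑' q : {q : Fin (n + 1) → ℤ // q ≠ 0}, ENNReal.ofReal (8 * ψ (supNatAbs q.1)) :=
        ENNReal.tsum_le_tsum fun q => volume_setOf_abs_int_add_sum_lt_inter_pi_le q.2 c (hψ _)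
    _ ≤ _ := ENNReal.tsum_comp_le_tsum_of_injective Subtype.val_injective
        fun q : Fin (n + 1) → ℤ => ENNReal.ofReal (8 * ψ (supNatAbs q))

theorem volume_limsup_approxSet_eq_zero {n : ℕ} {ψ : ℕ → ℝ} (hψ : ∀ m, 0 ≤ ψ m)
    (hsum : Summable fun m : ℕ => (m : ℝ) ^ n * ψ m) :
    volume (limsup (fun q : {q : Fin (n + 1) → ℤ // q ≠ 0} => approxSet ψ q.1) cofinite) = 0 := by
  set L := limsup (fun q : {q : Fin (n + 1) → ℤ // q ≠ 0} => approxSet ψ q.1) cofinite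
  suffices ∀ t : Fin (n + 1) → ℤ, volume (L ∩ univ.pi fun k => Icc (t k : ℝ) (t k + 1)) = 0 by
    refine measure_mono_null (fun h hh => mem_iUnion.2 ?_) (measure_iUnion_null this)
    exact ⟨fun k => ⌊h k⌋, hh, fun k _ => ⟨Int.floor_le _, (Int.lt_floor_add_one _).le⟩⟩
  intro t
  have hC : MeasurableSet (univ.pi fun k => Icc (t k : ℝ) (t k + 1)) :=
    MeasurableSet.univ_pi fun _ => measurableSet_Icc
  rw [← Measure.restrict_apply' hC]
  refine measure_limsup_cofinite_eq_zero ?_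
  simpa only [Measure.restrict_apply' hC] using
    tsum_volume_approxSet_inter_pi_ne_top hψ hsum fun k => (t k : ℝ)

theorem stmt14 (K : ℕ) (hK : 2 ≤ K) (ψ : ℕ → ℝ) (hψ : ∀ q, 0 < ψ q)
    (hsum : Summable (fun q : ℕ => (q : ℝ) ^ (K - 2) * ψ q)) :
    MeasureTheory.volume {h : Fin (K - 1) → ℝ |
      {pq : ℤ × (Fin (K - 1) → ℤ) | pq.2 ≠ 0 ∧
        |(pq.1 : ℝ) + ∑ k, (pq.2 k : ℝ) * h k|
          < ψ (Finset.univ.sup fun k => (pq.2 k).natAbs)}.Infinite} = 0 := by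
  obtain ⟨n, rfl⟩ : ∃ n, K = n + 2 := ⟨K - 2, by omega⟩
  exact measure_mono_null (setOf_infinite_subset_limsup_approxSet ψ)
    (volume_limsup_approxSet_eq_zero (fun m => (hψ m).le) hsum)
end
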